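/- arXiv:2302.00050 — 11 statements merged into one kernel-verified Lean document; each statement's English description precedes it below -/
import Mathlib

section
/- Let C be a category with colimits of directed diagrams, and let M be a class of morphisms of C that contains all isomorphisms and is closed under composition. If M is closed under colimits of continuous chains, then M is closed under all directed colimits; that is, for every diagram D indexed by a directed partially ordered set whose connecting morphisms all lie in M, with colimit cocone (c_i : Z_i → colim D), (1) every colimit injection c_i lies in M, and (2) for every cocone (f_i : Z_i → A) over D with all f_i in M, the unique induced morphism colim D → A lies in M. -/
open CategoryTheory CategoryTheory.Limits

universe v u w

variable {C : Type u} [Category.{v} C]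

/-- The inclusion functor from the poset of stages strictly below `j` into the
chain index `Set.Iio α`. -/
def Iio.incl {α : Ordinal.{w}} (j : Set.Iio α) :
    {i : Set.Iio α // i < j} ⥤ Set.Iio α :=
  Monotone.functor (f := (Subtype.val : {i : Set.Iio α // i < j} → Set.Iio α))
    (fun _ _ h => h)

/-- For a chain `F` indexed by the ordinals below `α` and a stage `j < α`, the canonical
cocone over the subchain of all stages `i < j` whose apex is `F.obj j`, with legs the
connecting morphisms. -/
def chainCoconeAt {α : Ordinal.{w}} (F : Set.Iio α ⥤ C) (j : Set.Iio α) :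
    Cocone (Iio.incl j ⋙ F) where
  pt := F.obj j
  ι :=
    { app := fun i => F.map (homOfLE i.2.le)
      naturality := fun i i' f => by
        dsimp [Iio.incl]
        rw [Category.comp_id, ← F.map_comp]
        congr 1 }

/-- A chain indexed by the ordinals below `α` is continuous if, for every limit ordinal
`j < α`, the object at stage `j` together with the connecting morphisms from the earlier
stages is a colimit of the subchain indexed by the `i < j`. -/
def IsContinuousChain {α : Ordinal.{w}} (F : Set.Iio α ⥤ C) : Prop :=
  ∀ j : Set.Iio α, Order.IsSuccLimit j.1 → Nonempty (IsColimit (chainCoconeAt F j))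

/-- A class of morphisms `M` is closed under the colimit (given by the colimit cocone `c`
with colimiting structure `hc`) of a diagram `F` if (1) all colimit injections lie in `M`,
and (2) for every cocone over `F` all of whose legs lie in `M`, the induced morphism out
of the colimit lies in `M`. -/
def ClosedUnderColimit (M : MorphismProperty C) {J : Type*} [Category J]
    {F : J ⥤ C} {c : Cocone F} (hc : IsColimit c) : Prop :=
  (∀ j : J, M (c.ι.app j)) ∧
  ∀ s : Cocone F, (∀ j : J, M (s.ι.app j)) → M (hc.desc s)

/-!
Induction on `#I`. A finite directed poset has a greatest element, at which the colimit injection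
is an isomorphism. An infinite directed poset `I` is the union of a continuous chain
`(I_γ)_{γ < α}` of directed subsets with `#I_γ < #I`: for countable `I`, `α = ω` and the `I_γ`
are finite; otherwise `α = (#I).ord` and `I_γ` is the closure, under a chosen binary upper bound,
of the first `γ` elements of `I`. By induction `M` is closed under the colimits of `F` over the
`I_γ`; these form a continuous chain with connecting maps in `M`, whose colimit is that of `F`.
-/

open Cardinal

section Image2Closure

variable {J : Type*} (u : J → J → J)

def adjoinImage2 (T : Set J) : Set J := T ∪ Set.image2 u T T

def image2Closure (S : Set J) : Set J := ⋃ n, (adjoinImage2 u)^[n] S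

lemma monotone_adjoinImage2 : Monotone (adjoinImage2 u) := fun _ _ h =>
  Set.union_subset_union h (Set.image2_subset h h)

lemma subset_image2Closure (S : Set J) : S ⊆ image2Closure u S :=
  Set.subset_iUnion (fun n => (adjoinImage2 u)^[n] S) 0

lemma image2Closure_mono : Monotone (image2Closure u) := fun _ _ h =>
  Set.iUnion_mono fun n => (monotone_adjoinImage2 u).iterate n h

lemma apply_mem_image2Closure {S : Set J} {x y : J} (hx : x ∈ image2Closure u S)
    (hy : y ∈ image2Closure u S) : u x y ∈ image2Closure u S := by
  obtain ⟨m, hm⟩ := Set.mem_iUnion.mp hx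
  obtain ⟨n, hn⟩ := Set.mem_iUnion.mp hy
  have hle : Monotone fun k => (adjoinImage2 u)^[k] :=
    Function.monotone_iterate_of_id_le fun _ => Set.subset_union_left
  refine Set.mem_iUnion.mpr ⟨max m n + 1, ?_⟩
  rw [Function.iterate_succ_apply']
  exact Or.inr (Set.mem_image2_of_mem (hle (le_max_left m n) S hm) (hle (le_max_right m n) S hn))

lemma image2Closure_iUnion {ι : Type*} [Preorder ι] [IsDirected ι (· ≤ ·)] {A : ι → Set J}
    (hA : Monotone A) : image2Closure u (⋃ i, A i) = ⋃ i, image2Closure u (A i) := by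
  refine (Set.iUnion_subset fun i => image2Closure_mono u (Set.subset_iUnion A i)).antisymm' ?_
  have key : ∀ n, (adjoinImage2 u)^[n] (⋃ i, A i) ⊆ ⋃ i, (adjoinImage2 u)^[n] (A i) := by
    intro n
    induction n with
    | zero => exact subset_rfl
    | succ n ih =>
      simp only [Function.iterate_succ_apply']
      rintro x (hx | ⟨a, ha, b, hb, rfl⟩)
      · obtain ⟨i, hi⟩ := Set.mem_iUnion.mp (ih hx)
        exact Set.mem_iUnion.mpr ⟨i, Or.inl hi⟩
      · obtain ⟨i, hi⟩ := Set.mem_iUnion.mp (ih ha)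
        obtain ⟨j, hj⟩ := Set.mem_iUnion.mp (ih hb)
        obtain ⟨k, hik, hjk⟩ := directed_of (· ≤ ·) i j
        exact Set.mem_iUnion.mpr ⟨k, Or.inr (Set.mem_image2_of_mem
          ((monotone_adjoinImage2 u).iterate n (hA hik) hi)
          ((monotone_adjoinImage2 u).iterate n (hA hjk) hj))⟩
  intro x hx
  obtain ⟨n, hn⟩ := Set.mem_iUnion.mp hx
  obtain ⟨i, hi⟩ := Set.mem_iUnion.mp (key n hn)
  exact Set.mem_iUnion.mpr ⟨i, Set.mem_iUnion.mpr ⟨n, hi⟩⟩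

lemma mk_adjoinImage2_le {κ : Cardinal} (hκ : ℵ₀ ≤ κ) {T : Set J} (hT : #T ≤ κ) :
    #(adjoinImage2 u T) ≤ κ :=
  calc #(adjoinImage2 u T) ≤ #T + #(Set.image2 u T T) := mk_union_le _ _
    _ ≤ κ + κ * κ := add_le_add hT (mk_image2_le.trans (mul_le_mul' hT hT))
    _ = κ := by rw [mul_eq_self hκ, add_eq_self hκ]

lemma mk_image2Closure_le (S : Set J) : #(image2Closure u S) ≤ max #S ℵ₀ := by
  have hstep : ∀ n, #((adjoinImage2 u)^[n] S) ≤ max #S ℵ₀ := by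
    intro n
    induction n with
    | zero => exact le_max_left _ _
    | succ n ih =>
      rw [Function.iterate_succ_apply']
      exact mk_adjoinImage2_le u (le_max_right _ _) ih
  have hunion := mk_iUnion_le_lift (fun n => (adjoinImage2 u)^[n] S)
  simp only [lift_uzero, mk_nat, lift_aleph0] at hunion
  calc #(image2Closure u S) ≤ ℵ₀ * ⨆ n, #((adjoinImage2 u)^[n] S) := hunion
    _ ≤ max #S ℵ₀ * max #S ℵ₀ := mul_le_mul' (le_max_right _ _) (ciSup_le' hstep)
    _ = max #S ℵ₀ := mul_eq_self (le_max_right _ _)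

end Image2Closure

structure ContinuousChainCover (J : Type*) [Preorder J] (α : Ordinal.{w}) where
  stage : Set.Iio α → Set J
  monotone : Monotone stage
  exists_mem (x : J) : ∃ γ, x ∈ stage γ
  exists_mem_lt (j : Set.Iio α) : Order.IsSuccLimit j.1 → ∀ x ∈ stage j, ∃ i < j, x ∈ stage i
  nonempty (γ : Set.Iio α) : Nonempty (stage γ)
  isDirected (γ : Set.Iio α) : IsDirected (stage γ) (· ≤ ·)
  mk_lt (γ : Set.Iio α) : #(stage γ) < #J

namespace ContinuousChainCover

variable {J : Type w} [Preorder J]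

instance {α : Ordinal.{w}} (D : ContinuousChainCover J α) (γ : Set.Iio α) :
    Nonempty (D.stage γ) :=
  D.nonempty γ

instance {α : Ordinal.{w}} (D : ContinuousChainCover J α) (γ : Set.Iio α) :
    IsDirected (D.stage γ) (· ≤ ·) :=
  D.isDirected γ

lemma nonempty_omega0 [Nonempty J] [IsDirected J (· ≤ ·)] (hJ : #J = ℵ₀) :
    Nonempty (ContinuousChainCover J Ordinal.omega0) := by
  have : Countable J := mk_le_aleph0_iff.mp hJ.le
  let := Encodable.ofCountable J
  let : Inhabited J := Classical.inhabited_of_nonempty ‹_›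
  let y := (directed_id (α := J) (r := (· ≤ ·))).sequence id
  have hy : Monotone y := (directed_id (α := J) (r := (· ≤ ·))).sequence_mono
  let T : ℕ → Set J := fun n => y '' Set.Iic n ∪ {x | Encodable.encode x < n}
  have hT : Monotone T := fun m n hmn =>
    Set.union_subset_union (Set.image_mono (Set.Iic_subset_Iic.mpr hmn))
      fun x (hx : _ < m) => show _ < n by omega
  have hyT (n : ℕ) : y n ∈ T n := Or.inl (Set.mem_image_of_mem y Set.self_mem_Iic)
  have hTtop (n : ℕ) : ∀ x ∈ T n, x ≤ y n := by
    rintro x (⟨m, hm, rfl⟩ | hx)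
    · exact hy hm
    · exact (directed_id.le_sequence x).trans (hy (Nat.succ_le_of_lt hx))
  let idx : Set.Iio Ordinal.omega0 → ℕ := fun γ => γ.1.card.toNat
  have hidx (n : ℕ) : idx ⟨n, Ordinal.natCast_lt_omega0 n⟩ = n := by simp [idx]
  exact ⟨{
    stage := fun γ => T (idx γ)
    monotone := fun γ γ' h => hT (toNat_le_toNat (Ordinal.card_le_card h)
      (Ordinal.card_lt_aleph0.mpr γ'.2))
    exists_mem := fun x => ⟨⟨_, Ordinal.natCast_lt_omega0 (Encodable.encode x + 1)⟩, by
      simp only [hidx]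
      exact Or.inr (Nat.lt_succ_self _)⟩
    exists_mem_lt := fun j hj => absurd (Ordinal.omega0_le_of_isSuccLimit hj) (not_le.mpr j.2)
    nonempty := fun γ => ⟨⟨_, hyT _⟩⟩
    isDirected := fun γ => ⟨fun a b => ⟨⟨_, hyT _⟩, hTtop _ _ a.2, hTtop _ _ b.2⟩⟩
    mk_lt := fun γ => hJ ▸ ((((Set.finite_Iic _).image y).union
      ((Set.finite_lt_nat (idx γ)).preimage Encodable.encode_injective.injOn)).lt_aleph0) }⟩

lemma nonempty_ord [Nonempty J] [IsDirected J (· ≤ ·)] (hJ : ℵ₀ < #J) :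
    Nonempty (ContinuousChainCover J (#J).ord) := by
  obtain ⟨x₀⟩ := ‹Nonempty J›
  choose u hu₁ hu₂ using (directed_of (· ≤ ·) : ∀ a b : J, ∃ c, a ≤ c ∧ b ≤ c)
  have hT : #(#J).ord.ToType = #J := by rw [mk_toType, card_ord]
  obtain ⟨e⟩ := Cardinal.eq.mp hT
  -- `x₀` keeps the stage `0` nonempty; at a limit `j`, `base j` is the union of the earlier bases.
  let base : Set.Iio (#J).ord → Set J := fun γ => insert x₀ (e '' Set.Iio (Ordinal.ToType.mk γ))
  have hbase : Monotone base := fun γ γ' h =>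
    Set.insert_subset_insert (Set.image_mono (Set.Iio_subset_Iio ((Ordinal.ToType.mk).monotone h)))
  have hbase_limit (j : Set.Iio (#J).ord) (hj : Order.IsSuccLimit j.1) :
      base j ⊆ ⋃ i : {i // i < j}, base i := by
    have h0 : (0 : Ordinal) < j.1 := hj.bot_lt
    rintro x (rfl | ⟨t, ht, rfl⟩)
    · exact Set.mem_iUnion.mpr ⟨⟨⟨0, h0.trans j.2⟩, h0⟩, Set.mem_insert _ _⟩
    · have hδ : (Ordinal.ToType.mk.symm t).1 < j.1 := Ordinal.ToType.mk.symm_apply_lt.mpr ht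
      refine Set.mem_iUnion.mpr ⟨⟨⟨_, (hj.succ_lt hδ).trans j.2⟩, hj.succ_lt hδ⟩,
        Set.mem_insert_of_mem _ ⟨t, ?_, rfl⟩⟩
      exact Ordinal.ToType.mk.symm_apply_lt.mp (Order.lt_succ (Ordinal.ToType.mk.symm t).1)
  have hbase_mk (γ) : #(base γ) < #J :=
    calc #(base γ) ≤ #(e '' Set.Iio (Ordinal.ToType.mk γ)) + 1 := mk_insert_le
      _ < #J := add_lt_of_lt hJ.le (mk_image_le.trans_lt ((mk_Iio_lt _ (by
          rw [hT, Ordinal.type_toType])).trans_eq hT)) (one_lt_aleph0.trans hJ)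
  exact ⟨{
    stage := fun γ => image2Closure u (base γ)
    monotone := fun γ γ' h => image2Closure_mono u (hbase h)
    exists_mem := fun x => by
      set δ := Ordinal.ToType.mk.symm (e.symm x)
      refine ⟨⟨_, (isSuccLimit_ord hJ.le).succ_lt δ.2.out⟩, subset_image2Closure u _
        (Set.mem_insert_of_mem _ ⟨e.symm x, ?_, e.apply_symm_apply x⟩)⟩
      exact Ordinal.ToType.mk.symm_apply_lt.mp (show δ.1 < Order.succ δ.1 from Order.lt_succ _)
    exists_mem_lt := fun j hj x hx => by
      have hx' := image2Closure_mono u (hbase_limit j hj) hx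
      rw [image2Closure_iUnion u (A := fun i : {i // i < j} => base i) fun _ _ h => hbase h] at hx'
      obtain ⟨i, hi⟩ := Set.mem_iUnion.mp hx'
      exact ⟨i.1, i.2, hi⟩
    nonempty := fun γ => ⟨⟨x₀, subset_image2Closure u _ (Set.mem_insert _ _)⟩⟩
    isDirected := fun γ =>
      ⟨fun a b => ⟨⟨u a b, apply_mem_image2Closure u a.2 b.2⟩, hu₁ _ _, hu₂ _ _⟩⟩
    mk_lt := fun γ => (mk_image2Closure_le u _).trans_lt (max_lt (hbase_mk γ) hJ) }⟩

theorem exists_of_aleph0_le [Nonempty J] [IsDirected J (· ≤ ·)] (hJ : ℵ₀ ≤ #J) :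
    ∃ α : Ordinal.{w}, Order.IsSuccLimit α ∧ Nonempty (ContinuousChainCover J α) := by
  rcases hJ.eq_or_lt with hJ | hJ
  · exact ⟨_, Ordinal.isSuccLimit_omega0, nonempty_omega0 hJ.symm⟩
  · exact ⟨_, isSuccLimit_ord hJ.le, nonempty_ord hJ⟩

end ContinuousChainCover

section Subdiagrams

variable {I : Type*} [Preorder I]

-- The diagram constructions here are reducible: otherwise `rw` rejects motives in which
-- `(restrictToSet F S).obj x` and `F.obj x.1` must be identified.
abbrev restrictToSet (F : I ⥤ C) (S : Set I) : S ⥤ C where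
  obj x := F.obj x.1
  map f := F.map (homOfLE (leOfHom f))
  map_comp f g := by rw [← F.map_comp]; rfl

variable {F : I ⥤ C}

abbrev coconeRestrict {S T : Set I} (h : S ⊆ T) (d : Cocone (restrictToSet F T)) :
    Cocone (restrictToSet F S) where
  pt := d.pt
  ι.app x := d.ι.app ⟨x.1, Set.mem_of_subset_of_mem h x.2⟩
  ι.naturality x y f := d.ι.naturality (homOfLE (leOfHom f) : (⟨x.1, h x.2⟩ : T) ⟶ ⟨y.1, h y.2⟩)

noncomputable def isColimitRestrictToSetUniv {c : Cocone F} (hc : IsColimit c) :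
    IsColimit (c.whisker (OrderIso.Set.univ (α := I)).equivalence.functor :
      Cocone (restrictToSet F Set.univ)) :=
  hc.whiskerEquivalence (OrderIso.Set.univ (α := I)).equivalence

lemma ClosedUnderColimit.of_restrictToSet_univ {M : MorphismProperty C} {c : Cocone F}
    (hc : IsColimit c) (h : ClosedUnderColimit M (isColimitRestrictToSetUniv hc)) :
    ClosedUnderColimit M hc := by
  refine ⟨fun i => h.1 ⟨i, trivial⟩, fun s hs => ?_⟩
  have hdesc : (isColimitRestrictToSetUniv hc).desc
      (s.whisker (OrderIso.Set.univ (α := I)).equivalence.functor) = hc.desc s :=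
    hc.hom_ext fun i => ((isColimitRestrictToSetUniv hc).fac _ ⟨i, trivial⟩).trans (hc.fac s i).symm
  exact hdesc ▸ h.2 _ fun x => hs x.1

variable (F) in
structure SubdiagramColimits (P : Type*) [Preorder P] where
  stage : P → Set I
  monotone : Monotone stage
  cocone (p : P) : Cocone (restrictToSet F (stage p))
  isColimit (p : P) : IsColimit (cocone p)

namespace SubdiagramColimits

variable {P : Type*} [Preorder P] (X : SubdiagramColimits F P)

lemma mem_stage_of_le {p q : P} (hpq : p ≤ q) {x : I} (hx : x ∈ X.stage p) : x ∈ X.stage q :=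
  X.monotone hpq hx

noncomputable abbrev functor : P ⥤ C where
  obj p := (X.cocone p).pt
  map {p q} f := (X.isColimit p).desc (coconeRestrict (X.monotone (leOfHom f)) (X.cocone q))
  map_id p := (X.isColimit p).hom_ext fun x =>
    ((X.isColimit p).fac _ x).trans (Category.comp_id _).symm
  map_comp {p q r} f g := (X.isColimit p).hom_ext fun x =>
    ((X.isColimit p).fac _ x).trans
      (((X.isColimit p).fac_assoc (coconeRestrict (X.monotone (leOfHom f)) (X.cocone q)) x _).trans
        ((X.isColimit q).fac (coconeRestrict (X.monotone (leOfHom g)) (X.cocone r)) _)).symm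

lemma ι_functor_map {p q : P} (f : p ⟶ q) (x : X.stage p) :
    (X.cocone p).ι.app x ≫ X.functor.map f =
      (X.cocone q).ι.app ⟨x.1, X.mem_stage_of_le (leOfHom f) x.2⟩ :=
  (X.isColimit p).fac _ x

lemma functor_map_mem {M : MorphismProperty C} (hX : ∀ p, ClosedUnderColimit M (X.isColimit p))
    {p q : P} (f : p ⟶ q) : M (X.functor.map f) :=
  (hX p).2 _ fun _ => (hX q).1 _

lemma ι_comp_app_eq_of_le (s : Cocone X.functor) {p q : P} (hpq : p ≤ q) (x : X.stage p) :
    (X.cocone p).ι.app x ≫ s.ι.app p =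
      (X.cocone q).ι.app ⟨x.1, X.mem_stage_of_le hpq x.2⟩ ≫ s.ι.app q :=
  calc (X.cocone p).ι.app x ≫ s.ι.app p
      = (X.cocone p).ι.app x ≫ X.functor.map (homOfLE hpq) ≫ s.ι.app q := by rw [s.w]
    _ = _ := by rw [← Category.assoc, ι_functor_map]

lemma ι_comp_app_eq [IsDirected P (· ≤ ·)] (s : Cocone X.functor) {p q : P} {x : I}
    (hp : x ∈ X.stage p) (hq : x ∈ X.stage q) :
    (X.cocone p).ι.app ⟨x, hp⟩ ≫ s.ι.app p = (X.cocone q).ι.app ⟨x, hq⟩ ≫ s.ι.app q := by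
  obtain ⟨r, hpr, hqr⟩ := directed_of (· ≤ ·) p q
  rw [X.ι_comp_app_eq_of_le s hpr, X.ι_comp_app_eq_of_le s hqr]

section Cover

variable {T : Set I} (hT : ∀ p, X.stage p ⊆ T)

noncomputable abbrev coconeOfSuperset (d : Cocone (restrictToSet F T)) : Cocone X.functor where
  pt := d.pt
  ι.app p := (X.isColimit p).desc (coconeRestrict (hT p) d)
  ι.naturality p q f := (X.isColimit p).hom_ext fun x => by simp

lemma ι_coconeOfSuperset_app (d : Cocone (restrictToSet F T)) (p : P) (x : X.stage p) :
    (X.cocone p).ι.app x ≫ (X.coconeOfSuperset hT d).ι.app p =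
      d.ι.app ⟨x.1, Set.mem_of_subset_of_mem (hT p) x.2⟩ :=
  (X.isColimit p).fac _ x

variable [IsDirected P (· ≤ ·)] (hcov : ∀ x ∈ T, ∃ p, x ∈ X.stage p)

noncomputable abbrev coconeOfCover (s : Cocone X.functor) : Cocone (restrictToSet F T) where
  pt := s.pt
  ι.app x := (X.cocone (hcov x.1 x.2).choose).ι.app ⟨x.1, (hcov x.1 x.2).choose_spec⟩ ≫ s.ι.app _
  ι.naturality x y f := by
    obtain ⟨r, hxr, hyr⟩ := directed_of (· ≤ ·) (hcov x.1 x.2).choose (hcov y.1 y.2).choose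
    have hx := X.mem_stage_of_le hxr (hcov x.1 x.2).choose_spec
    have hy := X.mem_stage_of_le hyr (hcov y.1 y.2).choose_spec
    rw [X.ι_comp_app_eq s _ hx, X.ι_comp_app_eq s _ hy]
    simpa using (X.cocone r).w_assoc (homOfLE (leOfHom f) : (⟨x.1, hx⟩ : X.stage r) ⟶ ⟨y.1, hy⟩)
      (s.ι.app r)

lemma coconeOfCover_ι_app (s : Cocone X.functor) (x : T) {p : P} (hx : x.1 ∈ X.stage p) :
    (X.coconeOfCover hcov s).ι.app x = (X.cocone p).ι.app ⟨x.1, hx⟩ ≫ s.ι.app p :=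
  X.ι_comp_app_eq s _ hx

noncomputable def isColimitCoconeOfSuperset {d : Cocone (restrictToSet F T)} (hd : IsColimit d) :
    IsColimit (X.coconeOfSuperset hT d) where
  desc s := hd.desc (X.coconeOfCover hcov s)
  fac s p := (X.isColimit p).hom_ext fun x => by
    rw [← Category.assoc, ι_coconeOfSuperset_app, hd.fac, coconeOfCover_ι_app _ hcov s _ x.2]
  uniq s m hm := hd.hom_ext fun x => by
    obtain ⟨p, hp⟩ := hcov x.1 x.2
    rw [hd.fac, coconeOfCover_ι_app _ hcov s x hp, ← hm p, ← Category.assoc,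
      ι_coconeOfSuperset_app]

lemma isColimitCoconeOfSuperset_desc {d : Cocone (restrictToSet F T)} (hd : IsColimit d)
    (e : Cocone (restrictToSet F T)) :
    (X.isColimitCoconeOfSuperset hT hcov hd).desc (X.coconeOfSuperset hT e) = hd.desc e :=
  hd.hom_ext fun x => by
    obtain ⟨p, hp⟩ := hcov x.1 x.2
    rw [hd.fac, ← X.ι_coconeOfSuperset_app hT d p ⟨x.1, hp⟩, Category.assoc,
      (X.isColimitCoconeOfSuperset hT hcov hd).fac, ι_coconeOfSuperset_app]

theorem closedUnderColimit_of_coconeOfSuperset {M : MorphismProperty C}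
    (hcomp : M.IsStableUnderComposition) (hX : ∀ p, ClosedUnderColimit M (X.isColimit p))
    {d : Cocone (restrictToSet F T)} (hd : IsColimit d)
    (hG : ClosedUnderColimit M (X.isColimitCoconeOfSuperset hT hcov hd)) :
    ClosedUnderColimit M hd := by
  refine ⟨fun x => ?_, fun e he => ?_⟩
  · obtain ⟨p, hp⟩ := hcov x.1 x.2
    rw [← X.ι_coconeOfSuperset_app hT d p ⟨x.1, hp⟩]
    exact hcomp.comp_mem _ _ ((hX p).1 _) (hG.1 p)
  · rw [← X.isColimitCoconeOfSuperset_desc hT hcov hd e]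
    exact hG.2 _ fun p => (hX p).2 _ fun _ => he _

end Cover

def comap {Q : Type*} [Preorder Q] (f : Q → P) (hf : Monotone f) : SubdiagramColimits F Q where
  stage q := X.stage (f q)
  monotone := X.monotone.comp hf
  cocone q := X.cocone (f q)
  isColimit q := X.isColimit (f q)

lemma isContinuousChain_functor {α : Ordinal.{w}} (X : SubdiagramColimits F (Set.Iio α))
    (hcont : ∀ j : Set.Iio α, Order.IsSuccLimit j.1 → ∀ x ∈ X.stage j, ∃ i < j, x ∈ X.stage i) :
    IsContinuousChain X.functor := fun j hj =>
  ⟨(X.comap (Subtype.val : {i // i < j} → _) fun _ _ h => h).isColimitCoconeOfSuperset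
    (fun i => X.monotone i.2.le) (fun x hx => by
      obtain ⟨i, hij, hi⟩ := hcont j hj x hx
      exact ⟨⟨i, hij⟩, hi⟩) (X.isColimit j)⟩

end SubdiagramColimits

end Subdiagrams

section

variable {M : MorphismProperty C}

lemma closedUnderColimit_of_isTerminal (hiso : MorphismProperty.isomorphisms C ≤ M)
    (hcomp : M.IsStableUnderComposition) {J : Type*} [Category J] {t : J} (ht : IsTerminal t)
    {F : J ⥤ C} (hF : ∀ {i j : J} (f : i ⟶ j), M (F.map f)) {c : Cocone F} (hc : IsColimit c) :
    ClosedUnderColimit M hc := by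
  have := hc.isIso_ι_app_of_isTerminal t ht
  refine ⟨fun j => ?_, fun s hs => ?_⟩
  · rw [← c.w (ht.from j)]
    exact hcomp.comp_mem _ _ (hF _) (hiso _ (.infer_property _))
  · rw [← IsIso.inv_hom_id_assoc (c.ι.app t) (hc.desc s), hc.fac]
    exact hcomp.comp_mem _ _ (hiso _ (.infer_property _)) (hs t)

theorem closedUnderColimit_of_continuousChainCover
    (hcolim : ∀ (J : Type w) (_ : PartialOrder J) (_ : Nonempty J)
      (_ : IsDirected J (· ≤ ·)), HasColimitsOfShape J C)
    (hcomp : M.IsStableUnderComposition) {α : Ordinal.{w}}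
    (hchain : ∀ (G : Set.Iio α ⥤ C), (∀ {i j : Set.Iio α} (f : i ⟶ j), M (G.map f)) →
      IsContinuousChain G → ∀ {c : Cocone G} (hc : IsColimit c), ClosedUnderColimit M hc)
    {I : Type w} [PartialOrder I] (D : ContinuousChainCover I α)
    {F : I ⥤ C} (hF : ∀ {i j : I} (f : i ⟶ j), M (F.map f))
    (hsmall : ∀ (J : Type w) [PartialOrder J] [Nonempty J] [IsDirected J (· ≤ ·)], #J < #I →
      ∀ (G : J ⥤ C), (∀ {i j : J} (f : i ⟶ j), M (G.map f)) →
        ∀ {d : Cocone G} (hd : IsColimit d), ClosedUnderColimit M hd)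
    {c : Cocone F} (hc : IsColimit c) : ClosedUnderColimit M hc := by
  have (γ : Set.Iio α) : HasColimitsOfShape (D.stage γ) C := hcolim _ _ inferInstance inferInstance
  let X : SubdiagramColimits F (Set.Iio α) :=
    ⟨D.stage, D.monotone, fun γ => colimit.cocone _, fun γ => colimit.isColimit _⟩
  have hX (γ : Set.Iio α) : ClosedUnderColimit M (X.isColimit γ) :=
    hsmall _ (D.mk_lt γ) _ (fun _ => hF _) _
  have hcov (x : I) (_ : x ∈ Set.univ) : ∃ γ, x ∈ X.stage γ := D.exists_mem x
  exact .of_restrictToSet_univ hc <| X.closedUnderColimit_of_coconeOfSuperset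
    (fun _ => Set.subset_univ _) hcov hcomp hX _ <|
    hchain X.functor (X.functor_map_mem hX) (X.isContinuousChain_functor D.exists_mem_lt) _

end

/-- Let `C` be a category with colimits of directed diagrams and `M` a
class of morphisms of `C` containing all isomorphisms and closed under composition. If `M`
is closed under colimits of continuous chains, then `M` is closed under all directed
colimits: for every diagram indexed by a directed poset (every finite subset has an upper
bound) with all connecting morphisms in `M` and any colimit cocone, all colimit injections
lie in `M`, and the morphism induced by any cocone with legs in `M` lies in `M`. -/
theorem MorphismProperty.closedUnderDirectedColimits_of_closedUnderChains
    (hcolim : ∀ (J : Type w) (_ : PartialOrder J) (_ : Nonempty J)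
      (_ : IsDirected J (· ≤ ·)), HasColimitsOfShape J C)
    (M : MorphismProperty C)
    (hiso : MorphismProperty.isomorphisms C ≤ M)
    (hcomp : M.IsStableUnderComposition)
    (hchain : ∀ (α : Ordinal.{w}), Order.IsSuccLimit α →
      ∀ (F : Set.Iio α ⥤ C), (∀ {i j : Set.Iio α} (f : i ⟶ j), M (F.map f)) →
        IsContinuousChain F →
        ∀ {c : Cocone F} (hc : IsColimit c), ClosedUnderColimit M hc)
    (I : Type w) [PartialOrder I] [Nonempty I] [IsDirected I (· ≤ ·)]
    (F : I ⥤ C) (hF : ∀ {i j : I} (f : i ⟶ j), M (F.map f))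
    {c : Cocone F} (hc : IsColimit c) :
    ClosedUnderColimit M hc := by
  suffices key : ∀ (κ : Cardinal.{w}) (J : Type w) [PartialOrder J] [Nonempty J]
      [IsDirected J (· ≤ ·)], #J = κ → ∀ (G : J ⥤ C), (∀ {i j : J} (f : i ⟶ j), M (G.map f)) →
      ∀ {d : Cocone G} (hd : IsColimit d), ClosedUnderColimit M hd from key _ I rfl F hF hc
  intro κ
  induction κ using WellFoundedLT.induction with
  | ind κ IH =>
  rintro J _ _ _ rfl G hG d hd
  rcases lt_or_ge #J ℵ₀ with hfin | hinf
  · have : Finite J := lt_aleph0_iff_finite.mp hfin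
    obtain ⟨t, ht⟩ := Finite.exists_le (id : J → J)
    exact closedUnderColimit_of_isTerminal hiso hcomp
      (IsTerminal.ofUniqueHom (fun j => homOfLE (ht j)) fun _ _ => Subsingleton.elim _ _) hG hd
  · obtain ⟨α, hα, ⟨D⟩⟩ := ContinuousChainCover.exists_of_aleph0_le hinf
    exact closedUnderColimit_of_continuousChainCover hcolim hcomp (hchain α hα) D hG
      (fun J' _ _ _ hJ' => IH _ hJ' J' rfl) hd
end

section
/- In the category Top of topological spaces and continuous maps, the class of open embeddings is closed under directed colimits: for every diagram (Z_i)_{i∈I} indexed by a directed partially ordered set I whose connecting continuous maps are all open embeddings, with colimit cocone (c_i : Z_i → Z) in Top, (1) every colimit injection c_i is an open embedding, and (2) for every cocone (f_i : Z_i → A) of open embeddings over the diagram, the unique induced continuous map Z → A is an open embedding. -/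
open CategoryTheory CategoryTheory.Limits

universe u

/-!
In a filtered colimit of spaces, `c_i x = c_j y` exactly when `x` and `y` become equal at some
common stage `k`. Hence `c_j⁻¹ (c_i U)` is the union over all `f : i ⟶ k`, `g : j ⟶ k` of
`F(g)⁻¹ (F(f) U)`; this is open when the connecting maps are open, and since the colimit carries
the final topology, the injections `c_i` are open maps. The same description of equality gives
injectivity of the `c_i` and of the induced map of a cocone of injections. Finally, the induced
map sends an open `U` to `⋃ i, f_i (c_i⁻¹ U)`, which is open when every `f_i` is an open map.
-/

open Function Topology

namespace TopCat

variable {J : Type u} [SmallCategory J] {F : J ⥤ TopCat.{u}} {c : Cocone F}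

lemma jointly_surjective_of_isColimit (hc : IsColimit c) (x : c.pt) :
    ∃ (j : J) (y : F.obj j), c.ι.app j y = x :=
  Types.jointly_surjective_of_isColimit (isColimitOfPreserves (forget TopCat) hc) x

lemma desc_ι_apply (hc : IsColimit c) (s : Cocone F) (j : J) (x : F.obj j) :
    hc.desc s (c.ι.app j x) = s.ι.app j x :=
  ConcreteCategory.congr_hom (hc.fac s j) x

lemma image_desc_eq_iUnion (hc : IsColimit c) (s : Cocone F) (U : Set c.pt) :
    hc.desc s '' U = ⋃ j, s.ι.app j '' (c.ι.app j ⁻¹' U) := by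
  ext z
  simp only [Set.mem_image, Set.mem_iUnion, Set.mem_preimage]
  constructor
  · rintro ⟨x, hx, rfl⟩
    obtain ⟨j, y, rfl⟩ := jointly_surjective_of_isColimit hc x
    exact ⟨j, y, hx, (desc_ι_apply hc s j y).symm⟩
  · rintro ⟨j, y, hy, rfl⟩
    exact ⟨c.ι.app j y, hy, desc_ι_apply hc s j y⟩

lemma isOpenMap_desc_of_isColimit (hc : IsColimit c) (s : Cocone F)
    (hs : ∀ j, IsOpenMap (s.ι.app j)) : IsOpenMap (hc.desc s) := fun U hU => by
  rw [image_desc_eq_iUnion hc s U]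
  exact isOpen_iUnion fun j => hs j _ ((isOpen_iff_of_isColimit c hc U).mp hU j)

section Filtered

variable [IsFilteredOrEmpty J]

lemma ι_eq_ι_iff_of_isColimit (hc : IsColimit c) {i j : J} {x : F.obj i} {y : F.obj j} :
    c.ι.app i x = c.ι.app j y ↔
      ∃ (k : J) (f : i ⟶ k) (g : j ⟶ k), F.map f x = F.map g y :=
  Types.FilteredColimit.isColimit_eq_iff (F ⋙ forget TopCat)
    (isColimitOfPreserves (forget TopCat) hc)

lemma preimage_ι_image_ι (hc : IsColimit c) {i : J} (U : Set (F.obj i)) (j : J) :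
    c.ι.app j ⁻¹' (c.ι.app i '' U) =
      ⋃ (k : J) (f : i ⟶ k) (g : j ⟶ k), F.map g ⁻¹' (F.map f '' U) := by
  ext y
  simp only [Set.mem_preimage, Set.mem_image, Set.mem_iUnion]
  constructor
  · rintro ⟨x, hx, hxy⟩
    obtain ⟨k, f, g, hfg⟩ := (ι_eq_ι_iff_of_isColimit hc).mp hxy
    exact ⟨k, f, g, x, hx, hfg⟩
  · rintro ⟨k, f, g, x, hx, hfg⟩
    exact ⟨x, hx, (ι_eq_ι_iff_of_isColimit hc).mpr ⟨k, f, g, hfg⟩⟩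

lemma isOpenMap_ι_of_isColimit (hc : IsColimit c)
    (hF : ∀ {i j : J} (f : i ⟶ j), IsOpenMap (F.map f)) (i : J) : IsOpenMap (c.ι.app i) :=
  fun U hU => (isOpen_iff_of_isColimit c hc _).mpr fun j => by
    rw [preimage_ι_image_ι hc U j]
    exact isOpen_iUnion fun k => isOpen_iUnion fun f => isOpen_iUnion fun g =>
      (hF f U hU).preimage (F.map g).hom.continuous

lemma injective_ι_of_isColimit (hc : IsColimit c)
    (hF : ∀ {i j : J} (f : i ⟶ j), Injective (F.map f)) (i : J) : Injective (c.ι.app i) :=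
  fun x y hxy => by
    obtain ⟨k, f, hf⟩ := (Types.FilteredColimit.isColimit_eq_iff'
      (isColimitOfPreserves (forget TopCat) hc) x y).mp hxy
    exact hF f hf

lemma injective_desc_of_isColimit (hc : IsColimit c) (s : Cocone F)
    (hs : ∀ j, Injective (s.ι.app j)) : Injective (hc.desc s) := fun x y hxy => by
  obtain ⟨j, x, y, rfl, rfl⟩ := Types.FilteredColimit.jointly_surjective_of_isColimit₂
    (isColimitOfPreserves (forget TopCat) hc) x y
  have h : s.ι.app j x = s.ι.app j y :=
    (desc_ι_apply hc s j x).symm.trans (hxy.trans (desc_ι_apply hc s j y))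
  exact congrArg (c.ι.app j) (hs j h)

lemma isOpenEmbedding_ι_of_isColimit (hc : IsColimit c)
    (hF : ∀ {i j : J} (f : i ⟶ j), IsOpenEmbedding (F.map f)) (i : J) :
    IsOpenEmbedding (c.ι.app i) :=
  .of_continuous_injective_isOpenMap (c.ι.app i).hom.continuous
    (injective_ι_of_isColimit hc (fun f => (hF f).injective) i)
    (isOpenMap_ι_of_isColimit hc (fun f => (hF f).isOpenMap) i)

lemma isOpenEmbedding_desc_of_isColimit (hc : IsColimit c) (s : Cocone F)
    (hs : ∀ j, IsOpenEmbedding (s.ι.app j)) : IsOpenEmbedding (hc.desc s) :=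
  .of_continuous_injective_isOpenMap (hc.desc s).hom.continuous
    (injective_desc_of_isColimit hc s fun j => (hs j).injective)
    (isOpenMap_desc_of_isColimit hc s fun j => (hs j).isOpenMap)

end Filtered

end TopCat

theorem TopCat.isOpenEmbedding_closed_under_directed_colimits_general
    (I : Type u) [PartialOrder I] [IsDirected I (· ≤ ·)]
    (F : I ⥤ TopCat.{u})
    (hF : ∀ {i j : I} (f : i ⟶ j), Topology.IsOpenEmbedding (F.map f))
    (c : Cocone F) (hc : IsColimit c) :
    (∀ i : I, Topology.IsOpenEmbedding (c.ι.app i)) ∧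
    (∀ s : Cocone F, (∀ i : I, Topology.IsOpenEmbedding (s.ι.app i)) →
      Topology.IsOpenEmbedding (hc.desc s)) :=
  ⟨isOpenEmbedding_ι_of_isColimit hc hF, isOpenEmbedding_desc_of_isColimit hc⟩

/-- In `Top`, the class of open embeddings is closed under directed
colimits: for every diagram indexed by a directed partially ordered set whose connecting
maps are open embeddings, with a colimit cocone `c`, (1) every colimit injection is an
open embedding, and (2) for every cocone of open embeddings over the diagram, the induced
continuous map out of the colimit is an open embedding. -/
theorem TopCat.isOpenEmbedding_closed_under_directed_colimits
    (I : Type u) [PartialOrder I] [Nonempty I] [IsDirected I (· ≤ ·)]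
    (F : I ⥤ TopCat.{u})
    (hF : ∀ {i j : I} (f : i ⟶ j), Topology.IsOpenEmbedding (F.map f))
    (c : Cocone F) (hc : IsColimit c) :
    (∀ i : I, Topology.IsOpenEmbedding (c.ι.app i)) ∧
    (∀ s : Cocone F, (∀ i : I, Topology.IsOpenEmbedding (s.ι.app i)) →
      Topology.IsOpenEmbedding (hc.desc s)) :=
  TopCat.isOpenEmbedding_closed_under_directed_colimits_general I F hF c hc
end

section
/- Every directed diagram of embeddings in Top has a colimit cocone formed by embeddings: for every diagram (Z_i)_{i∈I} indexed by a directed partially ordered set I whose connecting continuous maps are all embeddings, each colimit injection c_i : Z_i → colim D in Top is an embedding. -/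
open CategoryTheory CategoryTheory.Limits Topology

universe u v w

/-!
Filtered colimits are computed on underlying sets, so the colimit injections are injective.
A closed set `C` of `Z i` is cut out by the set glued from the closures of the images of `C` in
the later stages `Z k`: since the connecting maps are embeddings, its trace on each `Z k` is
exactly that closure, so it is closed in a cofinal family of stages, hence in the colimit, and
its trace on `Z i` is `C`.
-/

lemma Topology.IsInducing.of_forall_isClosed_exists {X Y : Type*} [TopologicalSpace X]
    [TopologicalSpace Y] {f : X → Y} (hf : Continuous f)
    (h : ∀ s, IsClosed s → ∃ t, IsClosed t ∧ f ⁻¹' t = s) : IsInducing f := by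
  refine ⟨TopologicalSpace.ext_isClosed fun s ↦
    ⟨fun hs ↦ isClosed_induced_iff.2 (h s hs), fun hs ↦ ?_⟩⟩
  obtain ⟨t, ht, rfl⟩ := isClosed_induced_iff.1 hs
  exact ht.preimage hf

namespace TopCat

theorem injective_ι_of_injective_map {J : Type u} [SmallCategory J] [IsFiltered J]
    {F : J ⥤ TopCat.{u}} (hF : ∀ {i j : J} (f : i ⟶ j), Function.Injective (F.map f))
    {c : Cocone F} (hc : IsColimit c) (i : J) : Function.Injective (c.ι.app i) := by
  intro x y hxy
  obtain ⟨j, f, hf⟩ := (Types.FilteredColimit.isColimit_eq_iff'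
    (isColimitOfPreserves (forget TopCat) hc) x y).1 hxy
  exact hF f hf

theorem isClosed_of_forall_le_isClosed_preimage_ι {I : Type u} [Preorder I]
    [IsDirected I (· ≤ ·)] {F : I ⥤ TopCat.{u}} {c : Cocone F} (hc : IsColimit c) (i : I)
    {D : Set c.pt} (hD : ∀ k, i ≤ k → IsClosed (c.ι.app k ⁻¹' D)) : IsClosed D := by
  refine (isClosed_iff_of_isColimit c hc D).2 fun l ↦ ?_
  obtain ⟨k, hik, hlk⟩ := exists_ge_ge i l
  rw [← c.w (homOfLE hlk)]
  exact (hD k hik).preimage (F.map _).hom.continuous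

theorem preimage_ι_iUnion_image_closure_image {I : Type v} [Preorder I]
    [IsDirected I (· ≤ ·)] {F : I ⥤ TopCat.{w}}
    (hF : ∀ {i j : I} (f : i ⟶ j), IsEmbedding (F.map f)) {c : Cocone F}
    (hc : ∀ k, Function.Injective (c.ι.app k)) {i k : I} (f : i ⟶ k) (S : Set (F.obj i)) :
    c.ι.app k ⁻¹' (⋃ j, ⋃ g : i ⟶ j, c.ι.app j '' closure (F.map g '' S)) =
      closure (F.map f '' S) := by
  ext x
  simp only [Set.mem_preimage, Set.mem_iUnion, Set.mem_image]
  refine ⟨?_, fun hx ↦ ⟨k, f, x, hx, rfl⟩⟩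
  rintro ⟨j, g, y, hy, hyx⟩
  obtain ⟨m, hkm, hjm⟩ := exists_ge_ge k j
  have hmeet : F.map (homOfLE hkm) x = F.map (homOfLE hjm) y := by
    apply hc m
    simp only [← ConcreteCategory.comp_apply, c.w, hyx]
  have himage :
      F.map (homOfLE hjm) '' (F.map g '' S) = F.map (homOfLE hkm) '' (F.map f '' S) := by
    simp only [Set.image_image, ← ConcreteCategory.comp_apply, ← F.map_comp,
      Subsingleton.elim (g ≫ homOfLE hjm) (f ≫ homOfLE hkm)]
  rw [(hF (homOfLE hkm)).closure_eq_preimage_closure_image, Set.mem_preimage, hmeet, ← himage]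
  exact image_closure_subset_closure_image (F.map _).hom.continuous ⟨y, hy, rfl⟩

end TopCat

theorem TopCat.colimit_injections_isEmbedding_of_directed_embeddings_general
    (I : Type u) [PartialOrder I] [IsDirected I (· ≤ ·)]
    (F : I ⥤ TopCat.{u})
    (hF : ∀ {i j : I} (f : i ⟶ j), Topology.IsEmbedding (F.map f))
    (c : Cocone F) (hc : IsColimit c) :
    ∀ i : I, Topology.IsEmbedding (c.ι.app i) := by
  intro i
  have : Nonempty I := ⟨i⟩
  have hinj := injective_ι_of_injective_map (fun f ↦ (hF f).injective) hc
  refine ⟨.of_forall_isClosed_exists (c.ι.app i).hom.continuous fun C hC ↦ ?_, hinj i⟩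
  refine ⟨⋃ j, ⋃ g : i ⟶ j, c.ι.app j '' closure (F.map g '' C),
    isClosed_of_forall_le_isClosed_preimage_ι hc i fun k hik ↦ ?_, ?_⟩
  · rw [preimage_ι_iUnion_image_closure_image hF hinj (homOfLE hik)]
    exact isClosed_closure
  · rw [preimage_ι_iUnion_image_closure_image hF hinj (𝟙 i), F.map_id]
    simp only [hom_id, ContinuousMap.coe_id, Set.image_id_eq, id_eq, hC.closure_eq]

/-- Every directed diagram of embeddings in `Top` has a colimit cocone
formed by embeddings: if all connecting maps of a diagram indexed by a directed partially
ordered set are (subspace) embeddings, then every colimit injection of a colimit cocone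
is an embedding. -/
theorem TopCat.colimit_injections_isEmbedding_of_directed_embeddings
    (I : Type u) [PartialOrder I] [Nonempty I] [IsDirected I (· ≤ ·)]
    (F : I ⥤ TopCat.{u})
    (hF : ∀ {i j : I} (f : i ⟶ j), Topology.IsEmbedding (F.map f))
    (c : Cocone F) (hc : IsColimit c) :
    ∀ i : I, Topology.IsEmbedding (c.ι.app i) :=
  TopCat.colimit_injections_isEmbedding_of_directed_embeddings_general I F hF c hc
end

section
/- For every infinite regular cardinal λ, a topological space X is λ-generated in the category Top if and only if X is a discrete space of cardinality less than λ; moreover, every discrete space of cardinality less than λ is λ-presentable in Top. -/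
open CategoryTheory CategoryTheory.Limits

universe u

/-- A partially ordered set is `κ`-directed if every subset of cardinality `< κ`
has an upper bound. -/
def IsCardDirected (κ : Cardinal.{u}) (I : Type u) [Preorder I] : Prop :=
  ∀ s : Set I, Cardinal.mk s < κ → ∃ ub : I, ∀ i ∈ s, i ≤ ub

/-- A topological space `X` is `κ`-presentable in `Top` if for every diagram indexed by a
`κ`-directed poset with colimit cocone `c`, every continuous map `f : X → c.pt` factors
through some colimit injection `c.ι.app i`, and any two factorizations through the same
stage are merged by some connecting map of the diagram. -/
def TopCat.IsPresentableObj (κ : Cardinal.{u}) (X : TopCat.{u}) : Prop :=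
  ∀ (I : Type u) [PartialOrder I], IsCardDirected κ I →
    ∀ (F : I ⥤ TopCat.{u}) (c : Cocone F), IsColimit c →
      ∀ f : X ⟶ c.pt,
        (∃ (i : I) (g : X ⟶ F.obj i), g ≫ c.ι.app i = f) ∧
        (∀ (i : I) (g g' : X ⟶ F.obj i), g ≫ c.ι.app i = f → g' ≫ c.ι.app i = f →
          ∃ (j : I) (h : i ≤ j), g ≫ F.map (homOfLE h) = g' ≫ F.map (homOfLE h))

/-- A topological space `X` is `κ`-generated in `Top` if the factorization property above
is required only for diagrams whose connecting maps are monomorphisms, i.e. injective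
continuous maps. -/
def TopCat.IsGeneratedObj (κ : Cardinal.{u}) (X : TopCat.{u}) : Prop :=
  ∀ (I : Type u) [PartialOrder I], IsCardDirected κ I →
    ∀ (F : I ⥤ TopCat.{u}), (∀ {i j : I} (f : i ⟶ j), Function.Injective (F.map f)) →
      ∀ (c : Cocone F), IsColimit c →
        ∀ f : X ⟶ c.pt,
          (∃ (i : I) (g : X ⟶ F.obj i), g ≫ c.ι.app i = f) ∧
          (∀ (i : I) (g g' : X ⟶ F.obj i), g ≫ c.ι.app i = f → g' ≫ c.ι.app i = f →
            ∃ (j : I) (h : i ≤ j), g ≫ F.map (homOfLE h) = g' ≫ F.map (homOfLE h))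

/-!
A discrete space `X` with `#X < κ` is `κ`-presentable because `Top(X, -)` is
`Type(X, forget -)`, the forgetful functor preserves colimits, and sets of size `< κ` are
`κ`-presentable in `Type`.

Conversely let `X` be `κ`-generated. To see that a subset `A` is open, consider the point set
`Bool ⊕ κ` with a chain of coarsening topologies in which the two points `inl b` are
separated at every stage but become indistinguishable in the colimit topology: every
neighbourhood of `inl b` contains a tail of the `inr` points, and at stage `i` a point `inr j`
drags both `inl` points into its neighbourhoods once `j < i`. Then `x ↦ inl (x ∈ A)` is
continuous into the colimit, and pulling back a separating open set of the stage through
which it factors yields `A`. Once `X` is discrete, it is the colimit of its discrete subsets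
of size `< κ`, and factoring the identity through one of them bounds `#X`.
-/

open Cardinal Set Filter Topology

lemma isCardDirected_iff_isCardinalFiltered {κ : Cardinal.{u}} [Fact κ.IsRegular] {I : Type u}
    [Preorder I] : IsCardDirected κ I ↔ IsCardinalFiltered I κ := by
  refine ⟨fun h => isCardinalFiltered_preorder I κ fun K s hK => ?_, fun h s hs => ?_⟩
  · obtain ⟨j, hj⟩ := h (range s) (mk_range_le.trans_lt hK)
    exact ⟨j, fun k => hj _ ⟨k, rfl⟩⟩
  · have hs' : HasCardinalLT s κ := (hasCardinalLT_iff_cardinal_mk_lt _ _).2 hs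
    exact ⟨IsCardinalFiltered.max (Subtype.val : s → I) hs',
      fun i hi => leOfHom (IsCardinalFiltered.toMax (Subtype.val : s → I) hs' ⟨i, hi⟩)⟩

namespace TopCat

variable {κ : Cardinal.{u}}

lemma isPresentableObj_of_isCardinalPresentable [Fact κ.IsRegular] (X : TopCat.{u})
    [IsCardinalPresentable X κ] : IsPresentableObj κ X := by
  intro I _ hI F c hc f
  have := isCardDirected_iff_isCardinalFiltered.1 hI
  have := isFiltered_of_isCardinalFiltered I κ
  have := preservesColimitsOfShape_of_isCardinalPresentable X κ I
  refine ⟨exists_hom_of_preservesColimit_coyoneda hc f, fun i g g' hg hg' => ?_⟩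
  obtain ⟨j, a, h⟩ := exists_eq_of_preservesColimit_coyoneda_self hc g g' (hg.trans hg'.symm)
  exact ⟨j, leOfHom a, h⟩

lemma isCardinalPresentable_of_discreteTopology [Fact κ.IsRegular] (X : TopCat.{u})
    [DiscreteTopology X] (hX : #X < κ) : IsCardinalPresentable X κ :=
  have := ((hasCardinalLT_iff_cardinal_mk_lt _ _).2 hX).isCardinalPresentable
  have := adj₁.isCardinalPresentable_leftAdjoint_obj κ (X : Type u)
  isCardinalPresentable_of_iso (isoOfHomeo (X := discrete.obj X) (Y := X)
    { toEquiv := Equiv.refl X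
      continuous_toFun := continuous_of_discreteTopology
      continuous_invFun := continuous_of_discreteTopology }) κ

lemma IsPresentableObj.isGeneratedObj {X : TopCat.{u}} (h : IsPresentableObj κ X) :
    IsGeneratedObj κ X :=
  fun I _ hI F _ c hc => h I hI F c hc

def LiftsAlongMonoColimits (I : Type u) [Preorder I] (X : TopCat.{u}) : Prop :=
  ∀ (F : I ⥤ TopCat.{u}), (∀ {i j : I} (f : i ⟶ j), Function.Injective (F.map f)) →
    ∀ (c : Cocone F), IsColimit c → ∀ f : X ⟶ c.pt, ∃ (i : I) (g : X ⟶ F.obj i), g ≫ c.ι.app i = f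

lemma IsGeneratedObj.liftsAlongMonoColimits {X : TopCat.{u}} (h : IsGeneratedObj κ X)
    {I : Type u} [PartialOrder I] (hI : IsCardDirected κ I) : LiftsAlongMonoColimits I X :=
  fun F hF c hc f => (h I hI F hF c hc f).1

section MonotoneTopologies

variable {I : Type u} [Preorder I] {P : Type u}

def diagramOfMonotone (τ : I → TopologicalSpace P) (hτ : Monotone τ) : I ⥤ TopCat.{u} where
  obj i := @of P (τ i)
  map h := @ofHom P P (τ _) (τ _) (@ContinuousMap.mk P P (τ _) (τ _) id
    (continuous_id_of_le (hτ (leOfHom h))))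

def coconeOfMonotone (τ : I → TopologicalSpace P) (hτ : Monotone τ) :
    Cocone (diagramOfMonotone τ hτ) where
  pt := @of P (⨆ i, τ i)
  ι.app i := @ofHom P P (τ i) (⨆ i, τ i) (@ContinuousMap.mk P P (τ i) (⨆ i, τ i) id
    (continuous_id_of_le (le_iSup τ i)))

noncomputable def isColimitCoconeOfMonotone [Nonempty I] [IsDirected I (· ≤ ·)]
    (τ : I → TopologicalSpace P) (hτ : Monotone τ) : IsColimit (coconeOfMonotone τ hτ) :=
  have hc : IsColimit ((forget TopCat).mapCocone (coconeOfMonotone τ hτ)) :=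
    Types.FilteredColimit.isColimitOf' _ _ (fun x => ⟨Classical.arbitrary I, x, rfl⟩)
      fun i _ _ h => ⟨i, 𝟙 i, h⟩
  ((nonempty_isColimit_iff_eq_coinduced _ hc).2
    (iSup_congr fun i => (coinduced_id (t := τ i)).symm)).some

end MonotoneTopologies

end TopCat

abbrev linkTopology {ι : Type u} (l : Filter ι) (L : Set ι) : TopologicalSpace (Bool ⊕ ι) where
  IsOpen U := (∀ b, Sum.inl b ∈ U → Sum.inr ⁻¹' U ∈ l) ∧
    ∀ i ∈ L, Sum.inr i ∈ U → ∀ b, Sum.inl b ∈ U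
  isOpen_univ := ⟨fun _ _ => univ_mem, fun _ _ _ _ => trivial⟩
  isOpen_inter U V hU hV :=
    ⟨fun b hb => inter_mem (hU.1 b hb.1) (hV.1 b hb.2),
      fun i hi h b => ⟨hU.2 i hi h.1 b, hV.2 i hi h.2 b⟩⟩
  isOpen_sUnion S hS := by
    refine ⟨fun b ⟨U, hUS, hbU⟩ => ?_,
      fun i hi ⟨U, hUS, hiU⟩ b => ⟨U, hUS, (hS U hUS).2 i hi hiU b⟩⟩
    exact mem_of_superset ((hS U hUS).1 b hbU) fun i hi => ⟨U, hUS, hi⟩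

lemma linkTopology_mono {ι : Type u} (l : Filter ι) : Monotone (linkTopology l) :=
  fun _ _ hLL' _ hU => ⟨hU.1, fun i hi => hU.2 i (hLL' hi)⟩

section LinkChain

variable {I : Type u} [Preorder I]

lemma isOpen_linkTopology_Iio (i : I) :
    IsOpen[linkTopology atTop (Iio i)] {p : Bool ⊕ I | Sum.elim (· = true) (i ≤ ·) p} :=
  ⟨fun _ _ => Ici_mem_atTop i, fun _ hj hij _ => (lt_irrefl _ (hj.trans_le hij)).elim⟩

variable [Nonempty I] [IsDirected I (· ≤ ·)] [NoMaxOrder I]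

lemma inl_mem_of_isOpen_iSup_linkTopology {U : Set (Bool ⊕ I)}
    (hU : IsOpen[⨆ i, linkTopology atTop (Iio i)] U) {b : Bool} (hb : Sum.inl b ∈ U)
    (b' : Bool) : Sum.inl b' ∈ U := by
  rw [isOpen_iSup_iff] at hU
  obtain ⟨j, hj⟩ := nonempty_of_mem (f := atTop) ((hU (Classical.arbitrary I)).1 b hb)
  obtain ⟨k, hjk⟩ := exists_gt j
  exact (hU k).2 j hjk hj b'

lemma continuous_inl_comp_iSup_linkTopology {X : Type*} [TopologicalSpace X] (φ : X → Bool) :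
    Continuous[_, ⨆ i, linkTopology atTop (Iio i)] (Sum.inl ∘ φ : X → Bool ⊕ I) := by
  refine continuous_def.2 fun U hU => ?_
  rcases (Sum.inl ⁻¹' U).eq_empty_or_nonempty with h | ⟨b, hb⟩
  · rw [preimage_comp, h, preimage_empty]
    exact isOpen_empty
  · rw [preimage_comp, eq_univ_of_forall (s := Sum.inl ⁻¹' U) fun b' =>
      inl_mem_of_isOpen_iSup_linkTopology hU hb b', preimage_univ]
    exact isOpen_univ

end LinkChain

namespace TopCat

lemma LiftsAlongMonoColimits.discreteTopology {I : Type u} [Preorder I] [Nonempty I]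
    [IsDirected I (· ≤ ·)] [NoMaxOrder I] {X : TopCat.{u}} (h : LiftsAlongMonoColimits I X) :
    DiscreteTopology X := by
  refine discreteTopology_iff_forall_isOpen.2 fun A => ?_
  classical
  let τ (i : I) := linkTopology atTop (Iio i)
  have hτ : Monotone τ := fun _ _ hij => linkTopology_mono _ (Iio_subset_Iio hij)
  let f : X ⟶ (coconeOfMonotone τ hτ).pt :=
    @ofHom X (Bool ⊕ I) _ (⨆ i, τ i) (@ContinuousMap.mk X (Bool ⊕ I) _ (⨆ i, τ i) _
      (continuous_inl_comp_iSup_linkTopology fun x => decide (x ∈ A)))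
  obtain ⟨i, g, hg⟩ :=
    h _ (fun _ => Function.injective_id) _ (isColimitCoconeOfMonotone τ hτ) f
  have hA : A = g ⁻¹' {p | Sum.elim (· = true) (i ≤ ·) p} := by
    ext x
    have hx : g x = Sum.inl (decide (x ∈ A)) := ConcreteCategory.congr_hom hg x
    rw [mem_preimage, hx]
    exact decide_eq_true_iff.symm
  rw [hA]
  exact (isOpen_linkTopology_Iio i).preimage g.hom.continuous

lemma LiftsAlongMonoColimits.mk_lt {κ : Cardinal.{u}} (hκ : ℵ₀ ≤ κ) {X : TopCat.{u}} [DiscreteTopology X]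
    (h : LiftsAlongMonoColimits (HasCardinalLT.Set X κ) X) : #X < κ := by
  have := adj₁.leftAdjoint_preservesColimits
  let f : X ⟶ discrete.obj X :=
    @ofHom X X _ ⊥ (@ContinuousMap.mk X X _ ⊥ id (@continuous_of_discreteTopology _ _ _ _ ⊥ _))
  obtain ⟨A, g, hg⟩ := h (HasCardinalLT.Set.functor X κ ⋙ discrete)
    (fun _ _ _ hxy => Subtype.ext (congrArg Subtype.val hxy :)) _
    (isColimitOfPreserves discrete (HasCardinalLT.Set.isColimitCocone X κ hκ)) f
  have hgx (x : X) : (g x).1 = x := ConcreteCategory.congr_hom hg x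
  calc #X ≤ #A.1 := mk_le_of_injective fun x y hxy =>
      (hgx x).symm.trans ((congrArg _ hxy).trans (hgx y))
    _ < κ := (hasCardinalLT_iff_cardinal_mk_lt _ _).1 A.2

end TopCat

/-- Gabriel–Ulmer, corrected. For every infinite regular cardinal `κ`,
a topological space is `κ`-generated in `Top` iff it is a discrete space of cardinality
less than `κ`; moreover every discrete space of cardinality `< κ` is `κ`-presentable. -/
theorem TopCat.isGenerated_iff_discrete_of_card_lt (κ : Cardinal.{u})
    (hκ : κ.IsRegular) (X : TopCat.{u}) :
    (TopCat.IsGeneratedObj κ X ↔ (DiscreteTopology X ∧ Cardinal.mk X < κ)) ∧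
    ((DiscreteTopology X ∧ Cardinal.mk X < κ) → TopCat.IsPresentableObj κ X) := by
  have := Fact.mk hκ
  have hpres : DiscreteTopology X ∧ #X < κ → IsPresentableObj κ X := fun ⟨_, hX⟩ =>
    have := isCardinalPresentable_of_discreteTopology X hX
    isPresentableObj_of_isCardinalPresentable X
  refine ⟨⟨fun hX => ?_, fun h => (hpres h).isGeneratedObj⟩, hpres⟩
  have := Cardinal.noMaxOrder hκ.aleph0_le
  have := Ordinal.nonempty_toType_iff.2 hκ.ord_pos.ne'
  have : DiscreteTopology X :=
    (hX.liftsAlongMonoColimits (isCardDirected_iff_isCardinalFiltered.2 inferInstance :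
      IsCardDirected κ κ.ord.ToType)).discreteTopology
  exact ⟨this, (hX.liftsAlongMonoColimits
    (isCardDirected_iff_isCardinalFiltered.2 inferInstance)).mk_lt hκ.aleph0_le⟩
end

section
/- In the category Top of topological spaces, a space X is finitely generated with respect to open embeddings if and only if X is compact (every open cover of X has a finite subcover). -/
/-!
If `X` is compact and `c` is a directed colimit of open embeddings, then the colimit
injections are themselves open embeddings (their ranges are pulled back, at a common later
stage, along injective maps), so the compact image of `f : X → c.pt` is covered by the
increasing open ranges and lies in one of them; `f` lifts there, uniquely as the injection is
injective. Conversely, a directed open cover of `X` exhibits `X` as the directed colimit of its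
members, and factoring `𝟙 X` through one stage shows that this member is all of `X`; this is
compactness of `⊤` in the frame of opens.
-/

open CategoryTheory CategoryTheory.Limits

universe u

/-- A topological space `X` is finitely generated with respect to open embeddings in `Top`
if for every diagram indexed by a directed poset (every finite subset has an upper bound)
whose connecting maps are open embeddings, with colimit cocone `c`, every continuous map
`f : X → c.pt` factors through some colimit injection, essentially uniquely (any two
factorizations through the same stage are merged by a connecting map). -/
def TopCat.FinGenWrtOpenEmbeddings (X : TopCat.{u}) : Prop :=
  ∀ (I : Type u) [PartialOrder I] [Nonempty I] [IsDirected I (· ≤ ·)]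
    (F : I ⥤ TopCat.{u}),
    (∀ {i j : I} (f : i ⟶ j), Topology.IsOpenEmbedding (F.map f)) →
    ∀ (c : Cocone F), IsColimit c →
      ∀ f : X ⟶ c.pt,
        (∃ (i : I) (g : X ⟶ F.obj i), g ≫ c.ι.app i = f) ∧
        (∀ (i : I) (g g' : X ⟶ F.obj i), g ≫ c.ι.app i = f → g' ≫ c.ι.app i = f →
          ∃ (j : I) (h : i ≤ j), g ≫ F.map (homOfLE h) = g' ≫ F.map (homOfLE h))

open Topology TopologicalSpace

lemma compactSpace_of_forall_directed_isOpenCover {X : Type u} [TopologicalSpace X]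
    (h : ∀ (I : Type u) [PartialOrder I] [Nonempty I] [IsDirected I (· ≤ ·)] (V : I → Opens X),
      Monotone V → IsOpenCover V → ∃ i, V i = ⊤) :
    CompactSpace X := by
  rw [← isCompact_univ_iff, ← Opens.coe_top, ← Opens.isCompactElement_iff,
    CompleteLattice.isCompactElement_iff_le_of_directed_sSup_le]
  intro S hne hdir htop
  have := hne.to_subtype
  have := hdir.isDirectedOrder
  obtain ⟨⟨U, hU⟩, hUtop⟩ := h S ((↑) : S → Opens X) (Subtype.mono_coe _)
    (by rw [IsOpenCover, ← sSup_eq_iSup', eq_top_iff]; exact htop)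
  exact ⟨U, hU, hUtop.ge⟩

namespace TopCat

section FilteredColimit

variable {J : Type*} [Category J] {F : J ⥤ TopCat.{u}} {c : Cocone F}

lemma coe_ι_app_eq_comp {i k : J} (f : i ⟶ k) : ⇑(c.ι.app i) = c.ι.app k ∘ F.map f := by
  rw [← c.w f]
  rfl

variable [IsFiltered J]

lemma injective_ι_app_of_injective_map (hc : IsColimit c)
    (hF : ∀ {i j : J} (f : i ⟶ j), Function.Injective (F.map f)) (i : J) :
    Function.Injective (c.ι.app i) := by
  intro x y hxy
  obtain ⟨k, f, hf⟩ := (Types.FilteredColimit.isColimit_eq_iff'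
    (isColimitOfPreserves (forget TopCat) hc) x y).1 hxy
  exact hF f hf

variable (hc : IsColimit c) (hF : ∀ {i j : J} (f : i ⟶ j), IsOpenEmbedding (F.map f))
include hc hF

lemma isOpenEmbedding_ι_app (i : J) : IsOpenEmbedding (c.ι.app i) := by
  have hinj := injective_ι_app_of_injective_map hc fun f ↦ (hF f).injective
  refine .of_continuous_injective_isOpenMap (c.ι.app i).hom.continuous (hinj i) fun V hV ↦ ?_
  rw [isOpen_iff_of_isColimit c hc]
  intro j
  have hpre : c.ι.app j ⁻¹' (c.ι.app i '' V) =
      F.map (IsFiltered.rightToMax i j) ⁻¹' (F.map (IsFiltered.leftToMax i j) '' V) := by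
    rw [coe_ι_app_eq_comp (IsFiltered.leftToMax i j), coe_ι_app_eq_comp (IsFiltered.rightToMax i j),
      Set.image_comp, Set.preimage_comp, (hinj _).preimage_image]
  rw [hpre]
  exact ((hF _).isOpenMap _ hV).preimage (F.map _).hom.continuous

lemma IsCompact.exists_subset_range_ι_app {K : Set c.pt} (hK : IsCompact K) :
    ∃ i, K ⊆ Set.range (c.ι.app i) := by
  have : Nonempty J := IsFiltered.nonempty
  refine hK.elim_directed_cover _ (fun i ↦ (isOpenEmbedding_ι_app hc hF i).isOpen_range)
    (fun x _ ↦ ?_) fun i j ↦ ?_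
  · obtain ⟨i, y, rfl⟩ := Types.jointly_surjective (F ⋙ forget TopCat)
      (isColimitOfPreserves (forget TopCat) hc) x
    exact Set.mem_iUnion.2 ⟨i, y, rfl⟩
  · refine ⟨IsFiltered.max i j, ?_, ?_⟩ <;>
      simp only [coe_ι_app_eq_comp (IsFiltered.leftToMax i j),
        coe_ι_app_eq_comp (IsFiltered.rightToMax i j), Set.range_comp_subset_range]

lemma exists_comp_ι_app_eq {X : TopCat.{u}} [CompactSpace X] (f : X ⟶ c.pt) :
    ∃ i, ∃ g : X ⟶ F.obj i, g ≫ c.ι.app i = f := by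
  obtain ⟨i, hi⟩ := IsCompact.exists_subset_range_ι_app hc hF (isCompact_range f.hom.continuous)
  choose g hg using Set.range_subset_iff.1 hi
  have hgc : Continuous g := by
    rw [(isOpenEmbedding_ι_app hc hF i).isEmbedding.continuous_iff]
    exact (funext hg : c.ι.app i ∘ g = f) ▸ f.hom.continuous
  exact ⟨i, ofHom ⟨g, hgc⟩, by ext x; exact hg x⟩

end FilteredColimit

section OpenCover

variable {X : TopCat.{u}} {I : Type u} [Preorder I] {V : I → Opens X}

def openSubspacesCocone (hV : Monotone V) : Cocone (hV.functor ⋙ Opens.toTopCat X) where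
  pt := X
  ι := { app i := Opens.inclusion' (V i) }

lemma isColimit_openSubspacesCocone [IsDirected I (· ≤ ·)] [Nonempty I] (hV : Monotone V)
    (hcov : IsOpenCover V) : Nonempty (IsColimit (openSubspacesCocone hV)) := by
  rw [nonempty_isColimit_iff_eq_coinduced]
  · ext s
    rw [isOpen_iSup_iff]
    exact hcov.isOpen_iff_coe_preimage
  · refine Types.FilteredColimit.isColimitOf' _ _ (fun x ↦ ?_) fun i x y hxy ↦ ⟨i, 𝟙 i, ?_⟩
    · obtain ⟨i, hi⟩ := hcov.exists_mem x
      exact ⟨i, ⟨x, hi⟩, rfl⟩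
    · exact Subtype.ext hxy

end OpenCover

lemma FinGenWrtOpenEmbeddings.exists_eq_top {X : TopCat.{u}} (hX : X.FinGenWrtOpenEmbeddings)
    {I : Type u} [PartialOrder I] [Nonempty I] [IsDirected I (· ≤ ·)] {V : I → Opens X}
    (hV : Monotone V) (hcov : IsOpenCover V) : ∃ i, V i = ⊤ := by
  obtain ⟨hc⟩ := isColimit_openSubspacesCocone hV hcov
  obtain ⟨i, g, hg⟩ := (hX I _ (fun f ↦ Opens.isOpenEmbedding_of_le (hV f.le))
    (openSubspacesCocone hV) hc (𝟙 X)).1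
  refine ⟨i, eq_top_iff.2 fun x _ ↦ ?_⟩
  let y : V i := g x
  have hy : (y : X) = x := ConcreteCategory.congr_hom hg x
  exact hy ▸ y.2

lemma FinGenWrtOpenEmbeddings.compactSpace {X : TopCat.{u}} (hX : X.FinGenWrtOpenEmbeddings) :
    CompactSpace X :=
  compactSpace_of_forall_directed_isOpenCover fun _ _ _ _ _ hV hcov ↦ hX.exists_eq_top hV hcov

lemma finGenWrtOpenEmbeddings_of_compactSpace (X : TopCat.{u}) [CompactSpace X] :
    X.FinGenWrtOpenEmbeddings := by
  intro I _ _ _ F hF c hc f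
  refine ⟨exists_comp_ι_app_eq hc hF f, fun i g g' hg hg' ↦ ⟨i, le_rfl, ?_⟩⟩
  have : Mono (c.ι.app i) := (mono_iff_injective _).2 (isOpenEmbedding_ι_app hc hF i).injective
  rw [(cancel_mono (c.ι.app i)).1 (hg.trans hg'.symm)]

end TopCat

/-- In `Top`, a space is finitely generated with respect to open
embeddings if and only if it is compact. -/
theorem TopCat.finGenWrtOpenEmbeddings_iff_compact (X : TopCat.{u}) :
    TopCat.FinGenWrtOpenEmbeddings X ↔ CompactSpace X :=
  ⟨fun hX ↦ hX.compactSpace, fun _ ↦ finGenWrtOpenEmbeddings_of_compactSpace X⟩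
end

section
/- Let C be a full reflective subcategory of Top that contains a non-empty space X which is finitely generated in C. Then for every directed diagram of monomorphisms in C with colimit Z computed in Top, the reflection map (unit of the reflection) r_Z : Z → RZ is bijective on underlying sets. -/
open CategoryTheory CategoryTheory.Limits

universe u

/-- An object `X` of the full subcategory of `Top` given by a property `P` is finitely
generated there if for every diagram in the subcategory indexed by a directed poset
(every finite subset has an upper bound) whose connecting maps are monomorphisms
(injective continuous maps), with colimit cocone `c` in the subcategory, every morphism
`f : X ⟶ c.pt` factors through some colimit injection, essentially uniquely (any two
factorizations through the same stage are merged by a connecting map). -/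
def TopCat.FinGenIn (P : TopCat.{u} → Prop) (X : ObjectProperty.FullSubcategory P) : Prop :=
  ∀ (I : Type u) [PartialOrder I] [Nonempty I] [IsDirected I (· ≤ ·)]
    (F : I ⥤ ObjectProperty.FullSubcategory P),
    (∀ {i j : I} (f : i ⟶ j),
      Function.Injective ((ObjectProperty.ι P).map (F.map f))) →
    ∀ (c : Cocone F), IsColimit c →
      ∀ f : X ⟶ c.pt,
        (∃ (i : I) (g : X ⟶ F.obj i), g ≫ c.ι.app i = f) ∧
        (∀ (i : I) (g g' : X ⟶ F.obj i), g ≫ c.ι.app i = f → g' ≫ c.ι.app i = f →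
          ∃ (j : I) (h : i ≤ j), g ≫ F.map (homOfLE h) = g' ≫ F.map (homOfLE h))

/-!
Applying the reflector to the colimit cocone in `Top` gives a colimit cocone in `C` with
point `RZ`, whose legs are the legs of `Z` followed by `r_Z`. Testing against constant maps
from the non-empty finitely generated `X` turns finite generation into a statement about
points: every point of `RZ` comes from some stage (so `r_Z` is onto), and two points of one
stage identified in `RZ` are already identified at a later stage, hence in `Z` (so `r_Z` is
one-to-one).
-/

namespace CategoryTheory.Adjunction

variable {C D J : Type*} [Category C] [Category D] [Category J] {L : C ⥤ D} {i : D ⥤ C}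
  [i.Full] [i.Faithful] (adj : L ⊣ i) {F : J ⥤ D}

-- Reducible, so that `simp` sees its point as `L.obj c.pt` when building the colimit below.
noncomputable abbrev reflectorCocone (c : Cocone (F ⋙ i)) : Cocone F where
  pt := L.obj c.pt
  ι.app j := i.preimage (c.ι.app j ≫ adj.unit.app c.pt)
  ι.naturality j j' f := i.map_injective (by simpa using c.w_assoc f (adj.unit.app c.pt))

lemma map_reflectorCocone_ι_app (c : Cocone (F ⋙ i)) (j : J) :
    i.map ((adj.reflectorCocone c).ι.app j) = c.ι.app j ≫ adj.unit.app c.pt :=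
  i.map_preimage _

noncomputable def isColimitReflectorCocone {c : Cocone (F ⋙ i)} (hc : IsColimit c) :
    IsColimit (adj.reflectorCocone c) where
  desc s := L.map (hc.desc (i.mapCocone s)) ≫ adj.counit.app s.pt
  fac s j := i.map_injective (by simp)
  uniq s m hm := (adj.unit_comp_map_eq_iff m _).1 <| hc.hom_ext fun j => by
    simpa using congrArg i.map (hm j)

end CategoryTheory.Adjunction

namespace TopCat.FinGenIn

variable {P : TopCat.{u} → Prop} {X : ObjectProperty.FullSubcategory P}
  {I : Type u} [PartialOrder I] [Nonempty I] [IsDirected I (· ≤ ·)]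
  {F : I ⥤ ObjectProperty.FullSubcategory P}

lemma exists_ι_app_hom_eq (hfg : FinGenIn P X) (x₀ : X.obj)
    (hmono : ∀ {i j : I} (f : i ⟶ j), Function.Injective ((ObjectProperty.ι P).map (F.map f)))
    {c : Cocone F} (hc : IsColimit c) (w : c.pt.obj) :
    ∃ (i : I) (y : (F.obj i).obj), (c.ι.app i).hom y = w := by
  obtain ⟨i, g, hg⟩ := (hfg I F hmono c hc (ObjectProperty.homMk (TopCat.const w))).1
  exact ⟨i, g.hom x₀, congrArg (fun f => f.hom x₀) hg⟩

lemma exists_map_hom_eq_of_ι_app_hom_eq (hfg : FinGenIn P X) (x₀ : X.obj)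
    (hmono : ∀ {i j : I} (f : i ⟶ j), Function.Injective ((ObjectProperty.ι P).map (F.map f)))
    {c : Cocone F} (hc : IsColimit c) {k : I} {y y' : (F.obj k).obj}
    (h : (c.ι.app k).hom y = (c.ι.app k).hom y') :
    ∃ (l : I) (hkl : k ≤ l), (F.map (homOfLE hkl)).hom y = (F.map (homOfLE hkl)).hom y' := by
  let g : X ⟶ F.obj k := ObjectProperty.homMk (TopCat.const y)
  let g' : X ⟶ F.obj k := ObjectProperty.homMk (TopCat.const y')
  have hg' : g' ≫ c.ι.app k = g ≫ c.ι.app k := by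
    ext; exact h.symm
  obtain ⟨l, hkl, hl⟩ := (hfg I F hmono c hc _).2 k g g' rfl hg'
  exact ⟨l, hkl, congrArg (fun f => f.hom x₀) hl⟩

end TopCat.FinGenIn

open CategoryTheory.Limits.Types.FilteredColimit in
/-- Let `C` be a full reflective subcategory of `Top` (given by a property
`P` of spaces, with reflector `R` left adjoint to the inclusion) containing a non-empty
finitely generated object `X`. Then for every directed diagram of monomorphisms in `C`
with colimit `Z` computed in `Top`, the reflection map (the unit) `Z ⟶ RZ` is bijective. -/
theorem reflection_bijective_of_nonempty_finGen (P : TopCat.{u} → Prop)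
    (R : TopCat.{u} ⥤ ObjectProperty.FullSubcategory P) (adj : R ⊣ ObjectProperty.ι P)
    (X : ObjectProperty.FullSubcategory P) (hne : Nonempty X.obj) (hfg : TopCat.FinGenIn P X)
    (I : Type u) [PartialOrder I] [Nonempty I] [IsDirected I (· ≤ ·)]
    (F : I ⥤ ObjectProperty.FullSubcategory P)
    (hmono : ∀ {i j : I} (f : i ⟶ j),
      Function.Injective ((ObjectProperty.ι P).map (F.map f)))
    (c : Cocone (F ⋙ ObjectProperty.ι P)) (hc : IsColimit c) :
    Function.Bijective (adj.unit.app c.pt) := by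
  obtain ⟨x₀⟩ := hne
  have hc' := adj.isColimitReflectorCocone hc
  have hunit (i : I) (y : (F.obj i).obj) :
      adj.unit.app c.pt (c.ι.app i y) = ((adj.reflectorCocone c).ι.app i).hom y :=
    congrArg (fun f => f y) (adj.map_reflectorCocone_ι_app c i).symm
  constructor
  · intro z z' h
    obtain ⟨k, y, y', hy, hy'⟩ :=
      jointly_surjective_of_isColimit₂ (isColimitOfPreserves (forget TopCat) hc) z z'
    obtain rfl : c.ι.app k y = z := hy
    obtain rfl : c.ι.app k y' = z' := hy'
    rw [hunit, hunit] at h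
    obtain ⟨l, hkl, hl⟩ := hfg.exists_map_hom_eq_of_ι_app_hom_eq x₀ hmono hc' h
    rw [← c.w_apply (homOfLE hkl) y, ← c.w_apply (homOfLE hkl) y']
    exact congrArg _ hl
  · intro w
    obtain ⟨i, y, rfl⟩ := hfg.exists_ι_app_hom_eq x₀ hmono hc' w
    exact ⟨c.ι.app i y, hunit i y⟩
end

section
/- Let C be a full reflective subcategory of Top such that every object of C is a T₀-space and every compact metrizable space belongs to C. Then the empty space is the only finitely presentable object of C: every object X of C that is finitely presentable in C is empty. -/
open CategoryTheory CategoryTheory.Limits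

universe u

/-- An object `X` of the full subcategory of `Top` given by a property `P` is finitely
presentable there if for every diagram in the subcategory indexed by a directed poset
(every finite subset has an upper bound), with colimit cocone `c` in the subcategory,
every morphism `f : X ⟶ c.pt` factors through some colimit injection, essentially
uniquely (any two factorizations through the same stage are merged by a connecting map). -/
def TopCat.FinPresIn (P : TopCat.{u} → Prop) (X : ObjectProperty.FullSubcategory P) : Prop :=
  ∀ (I : Type u) [PartialOrder I] [Nonempty I] [IsDirected I (· ≤ ·)]
    (F : I ⥤ ObjectProperty.FullSubcategory P) (c : Cocone F), IsColimit c →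
      ∀ f : X ⟶ c.pt,
        (∃ (i : I) (g : X ⟶ F.obj i), g ≫ c.ι.app i = f) ∧
        (∀ (i : I) (g g' : X ⟶ F.obj i), g ≫ c.ι.app i = f → g' ≫ c.ι.app i = f →
          ∃ (j : I) (h : i ≤ j), g ≫ F.map (homOfLE h) = g' ≫ F.map (homOfLE h))

/-!
Let `σ` be the shift on the compact metrizable space `ℕ → Bool` and consider the sequential
diagram `Y → Y → ⋯` all of whose maps are `σ`. Two points become equal in its colimit as soon
as some iterates `σᵏ` identify them, and every point is a limit of points whose `σᵏ`-image
agrees with that of any given point. Hence, by continuity, the images of any two points in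
the colimit specialize to each other, and they coincide because the colimit is T₀. So the
constant maps from a nonempty `X` to the two constant sequences, both fixed by `σ`, agree in
the colimit, while they stay distinct at every finite stage: `X` is not finitely presentable.
-/

open Topology Filter Set

theorem Continuous.eq_of_mem_closure_preimage {X W : Type*} [TopologicalSpace X]
    [TopologicalSpace W] [T0Space W] {e : X → W} (he : Continuous e) {x y : X}
    (hx : x ∈ closure (e ⁻¹' {e y})) (hy : y ∈ closure (e ⁻¹' {e x})) : e x = e y := by
  have hyx : e y ⤳ e x := specializes_iff_mem_closure.2 (map_mem_closure he hx fun _ ↦ id)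
  have hxy : e x ⤳ e y := specializes_iff_mem_closure.2 (map_mem_closure he hy fun _ ↦ id)
  exact (hxy.antisymm hyx).eq

section Shift

variable {Y : Type*} [TopologicalSpace Y]

def seqShift : C(ℕ → Y, ℕ → Y) := ⟨fun x n ↦ x (n + 1), by fun_prop⟩

theorem seqShift_iterate_apply (k : ℕ) (x : ℕ → Y) (n : ℕ) :
    seqShift^[k] x n = x (n + k) := by
  induction k generalizing x with
  | zero => rfl
  | succ k ih => rw [Function.iterate_succ_apply, ih]; rfl

theorem mem_closure_setOf_seqShift_iterate_eq (x y : ℕ → Y) :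
    x ∈ closure {z | ∃ k, seqShift^[k] z = seqShift^[k] y} := by
  let splice (k : ℕ) : ℕ → Y := fun n ↦ if n < k then x n else y n
  have hlim : Tendsto splice atTop (𝓝 x) := tendsto_pi_nhds.2 fun n ↦
    tendsto_const_nhds.congr' <| (eventually_gt_atTop n).mono fun k hk ↦ by simp [splice, hk]
  refine mem_closure_of_tendsto hlim (Eventually.of_forall fun k ↦ ⟨k, ?_⟩)
  funext n
  simp [seqShift_iterate_apply, splice]

end Shift

section IterateDiagram

variable {C : Type*} [Category C] {Y : C} (q : Y ⟶ Y)

-- Reducible, so that its objects are syntactically `Y` and `g ≫ _` can be rewritten.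
abbrev iterateDiagram : ULift.{u} ℕ ⥤ C where
  obj _ := Y
  map φ := (Functor.ofSequence fun _ ↦ q).map (ULift.orderIso.monotone.functor.map φ)
  map_id _ := (Functor.ofSequence fun _ ↦ q).map_id _
  map_comp _ _ := (Functor.ofSequence fun _ ↦ q).map_comp _ _

theorem iterateDiagram_map_succ (n : ℕ) :
    (iterateDiagram.{u} q).map (homOfLE (show ULift.up n ≤ ULift.up (n + 1) from n.le_succ)) =
      q :=
  Functor.ofSequence_map_homOfLE_succ _ n

theorem comp_iterateDiagram_map_homOfLE {X : C} {g : X ⟶ Y} (hg : g ≫ q = g)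
    {i j : ULift.{u} ℕ} (hij : i ≤ j) : g ≫ (iterateDiagram q).map (homOfLE hij) = g := by
  obtain ⟨i⟩ := i
  obtain ⟨j⟩ := j
  change i ≤ j at hij
  induction j, hij using Nat.le_induction with
  | base => exact (congrArg (g ≫ ·) ((iterateDiagram q).map_id _)).trans (Category.comp_id g)
  | succ j hij ih =>
    calc g ≫ (iterateDiagram q).map _
        = g ≫ (iterateDiagram q).map (homOfLE (show ULift.up i ≤ ULift.up j from hij)) ≫
            (iterateDiagram q).map
              (homOfLE (show ULift.up j ≤ ULift.up (j + 1) from j.le_succ)) := by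
          rw [← Functor.map_comp]; rfl
      _ = g := by rw [iterateDiagram_map_succ, ← Category.assoc, ih, hg]

end IterateDiagram

section TopCat

variable {P : TopCat.{u} → Prop} {Y : ObjectProperty.FullSubcategory P}

theorem iterateDiagram_cocone_ι_app_apply (q : Y ⟶ Y) (c : Cocone (iterateDiagram q)) (n : ℕ)
    (x : Y.obj) : (c.ι.app ⟨0⟩).hom x = (c.ι.app ⟨n⟩).hom (q.hom^[n] x) := by
  induction n generalizing x with
  | zero => rfl
  | succ n ih =>
    have hw := c.w (homOfLE (show ULift.up n ≤ ULift.up (n + 1) from n.le_succ))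
    rw [iterateDiagram_map_succ] at hw
    rw [ih, ← hw, Function.iterate_succ_apply']
    rfl

theorem iterateDiagram_cocone_ι_app_eq {q : Y ⟶ Y} (c : Cocone (iterateDiagram q))
    [T0Space c.pt.obj]
    (hdense : ∀ x y : Y.obj, x ∈ closure {z | ∃ k, q.hom^[k] z = q.hom^[k] y}) (x y : Y.obj) :
    (c.ι.app ⟨0⟩).hom x = (c.ι.app ⟨0⟩).hom y := by
  have hsub (y : Y.obj) : {z | ∃ k, q.hom^[k] z = q.hom^[k] y} ⊆
      (c.ι.app ⟨0⟩).hom ⁻¹' {(c.ι.app ⟨0⟩).hom y} := by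
    rintro z ⟨k, hk⟩
    simp only [mem_preimage, mem_singleton_iff, iterateDiagram_cocone_ι_app_apply q c k, hk]
  exact Continuous.eq_of_mem_closure_preimage (W := c.pt.obj) (c.ι.app ⟨0⟩).hom.hom.continuous
    (closure_mono (hsub y) (hdense x y)) (closure_mono (hsub x) (hdense y x))

end TopCat

/-- Let `C` be a full reflective subcategory of `Top` (given by a property
`P`, with reflector `R` left adjoint to the inclusion) all of whose objects are T₀-spaces
and which contains every compact metrizable space. Then the empty space is the only
finitely presentable object of `C`. -/
theorem finPres_empty_of_T0_refl_subcat (P : TopCat.{u} → Prop)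
    (R : TopCat.{u} ⥤ ObjectProperty.FullSubcategory P) (adj : R ⊣ ObjectProperty.ι P)
    (hT0 : ∀ Y : TopCat.{u}, P Y → T0Space Y)
    (hcm : ∀ Y : TopCat.{u}, CompactSpace Y → TopologicalSpace.MetrizableSpace Y → P Y)
    (X : ObjectProperty.FullSubcategory P) (hX : TopCat.FinPresIn P X) :
    IsEmpty X.obj := by
  have : Reflective (ObjectProperty.ι P) := { L := R, adj := adj }
  have := hasColimitsOfShape_of_reflective (ObjectProperty.ι P) (J := ULift.{u} ℕ)
  let Y : ObjectProperty.FullSubcategory P :=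
    ⟨TopCat.of (ℕ → ULift.{u} Bool), hcm _ inferInstance inferInstance⟩
  let q : Y ⟶ Y := ObjectProperty.homMk (TopCat.ofHom seqShift)
  let c := colimit.cocone (iterateDiagram q)
  have : T0Space c.pt.obj := hT0 _ c.pt.property
  let const (b : Bool) : X ⟶ Y :=
    ObjectProperty.homMk (TopCat.ofHom (ContinuousMap.const _ fun _ ↦ ⟨b⟩))
  have hcolim : const true ≫ c.ι.app ⟨0⟩ = const false ≫ c.ι.app ⟨0⟩ := by
    ext x
    exact iterateDiagram_cocone_ι_app_eq c mem_closure_setOf_seqShift_iterate_eq _ _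
  obtain ⟨j, _, h⟩ := (hX _ _ c (colimit.isColimit _) _).2 ⟨0⟩ _ _ rfl hcolim.symm
  -- `rfl`: the shift fixes constant sequences
  rw [comp_iterateDiagram_map_homOfLE q rfl, comp_iterateDiagram_map_homOfLE q rfl] at h
  refine isEmpty_iff.2 fun x ↦ ?_
  have := congr_fun (ConcreteCategory.congr_hom (congrArg (·.hom) h) x) 0
  exact Bool.noConfusion (congrArg ULift.down this)
end

section
/- In the category Top₀ of T₀-spaces, a space X is finitely generated with respect to embeddings if and only if its underlying set is finite. -/
open CategoryTheory CategoryTheory.Limits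

universe u

/-- An object `X` of the full subcategory of `Top` given by a property `P` is finitely
generated with respect to embeddings there if for every diagram in the subcategory indexed
by a directed poset (every finite subset has an upper bound), whose connecting maps are
(subspace) embeddings, with colimit cocone `c` in the subcategory, every morphism
`f : X ⟶ c.pt` factors through some colimit injection, essentially uniquely (any two
factorizations through the same stage are merged by a connecting map). -/
def TopCat.FinGenWrtEmbeddingsIn (P : TopCat.{u} → Prop) (X : ObjectProperty.FullSubcategory P) : Prop :=
  ∀ (I : Type u) [PartialOrder I] [Nonempty I] [IsDirected I (· ≤ ·)]
    (F : I ⥤ ObjectProperty.FullSubcategory P),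
    (∀ {i j : I} (f : i ⟶ j),
      Topology.IsEmbedding ((ObjectProperty.ι P).map (F.map f))) →
    ∀ (c : Cocone F), IsColimit c →
      ∀ f : X ⟶ c.pt,
        (∃ (i : I) (g : X ⟶ F.obj i), g ≫ c.ι.app i = f) ∧
        (∀ (i : I) (g g' : X ⟶ F.obj i), g ≫ c.ι.app i = f → g' ≫ c.ι.app i = f →
          ∃ (j : I) (h : i ≤ j), g ≫ F.map (homOfLE h) = g' ≫ F.map (homOfLE h))

/-!
If `X` is finite, factorizations exist because the colimit injections of a directed diagram of
embeddings in `Top₀` are embeddings and jointly surjective. An open set of one stage extends to a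
compatible family of open sets of all stages (at a later stage, take the largest open set pulling
back into it), and such a family is a cocone into Sierpiński space; finitely many points then lift
to a common stage.

If `X` is infinite, pick an ultrafilter `𝒰` on `X` not of the form `𝓝 y ⊓ 𝓟 S`. It exists by
counting: there are at most `2 ^ #X` such filters but `2 ^ 2 ^ #X` ultrafilters (Pospíšil). Then
`X` is the colimit of its subspaces not in `𝒰`, a directed diagram of embeddings through no stage
of which the identity of `X` factors: if `V` is not open at `y ∈ V` but all its traces on these
subspaces are relatively open, then every ultrafilter above `𝓝 y ⊓ 𝓟 Vᶜ` is `𝒰`, so this filter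
is `𝒰`.
-/

open Topology Filter Cardinal

section LargestOpen

variable {A B C : Type*} [TopologicalSpace B] [TopologicalSpace C]

def largestOpenPreimageSubset (f : A → B) (U : Set A) : Set B :=
  ⋃₀ {W | IsOpen W ∧ f ⁻¹' W ⊆ U}

variable {f : A → B} {U : Set A}

lemma isOpen_largestOpenPreimageSubset : IsOpen (largestOpenPreimageSubset f U) :=
  isOpen_sUnion fun _ hW => hW.1

lemma preimage_largestOpenPreimageSubset_subset : f ⁻¹' largestOpenPreimageSubset f U ⊆ U := by
  rintro x ⟨W, ⟨-, hWU⟩, hxW⟩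
  exact hWU hxW

lemma subset_largestOpenPreimageSubset {W : Set B} (hW : IsOpen W) (hWU : f ⁻¹' W ⊆ U) :
    W ⊆ largestOpenPreimageSubset f U :=
  Set.subset_sUnion_of_mem ⟨hW, hWU⟩

lemma Topology.IsInducing.preimage_largestOpenPreimageSubset [TopologicalSpace A]
    (hf : IsInducing f) (hU : IsOpen U) :
    f ⁻¹' largestOpenPreimageSubset f U = U := by
  obtain ⟨W, hW, rfl⟩ := hf.isOpen_iff.1 hU
  exact preimage_largestOpenPreimageSubset_subset.antisymm
    (Set.preimage_mono (subset_largestOpenPreimageSubset hW subset_rfl))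

lemma Topology.IsInducing.preimage_largestOpenPreimageSubset_comp {e : B → C} (he : IsInducing e)
    (f : A → B) (U : Set A) :
    e ⁻¹' largestOpenPreimageSubset (e ∘ f) U = largestOpenPreimageSubset f U := by
  apply subset_antisymm
  · exact subset_largestOpenPreimageSubset
      (isOpen_largestOpenPreimageSubset.preimage he.continuous)
      preimage_largestOpenPreimageSubset_subset
  · obtain ⟨W, hW, hWeq⟩ := he.isOpen_iff.1 (isOpen_largestOpenPreimageSubset (f := f) (U := U))
    rw [← hWeq]
    refine Set.preimage_mono (subset_largestOpenPreimageSubset hW ?_)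
    rw [Set.preimage_comp, hWeq]
    exact preimage_largestOpenPreimageSubset_subset

end LargestOpen

section Pospisil

variable {β : Type*}

open Classical in
lemma Finset.exists_injOn_filter_mem (s : Finset (Set β)) :
    ∃ F : Finset β, Set.InjOn (fun A : Set β => F.filter (· ∈ A)) s := by
  choose sep hsep using fun (p : Set β × Set β) (hp : p ∈ s.offDiag) =>
    Set.symmDiff_nonempty.2 (Finset.mem_offDiag.1 hp).2.2
  refine ⟨s.offDiag.attach.image fun p => sep p.1 p.2, fun A hA B hB hAB => ?_⟩
  by_contra hne
  have hp : (A, B) ∈ s.offDiag := Finset.mem_offDiag.2 ⟨hA, hB, hne⟩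
  have hmem : sep (A, B) hp ∈ s.offDiag.attach.image fun p => sep p.1 p.2 :=
    Finset.mem_image.2 ⟨⟨_, hp⟩, Finset.mem_attach _ _, rfl⟩
  have hsame := congrArg (sep (A, B) hp ∈ ·) hAB
  simp only [Finset.mem_filter, hmem, true_and, eq_iff_iff] at hsame
  rcases Set.mem_symmDiff.1 (hsep _ hp) with ⟨h₁, h₂⟩ | ⟨h₁, h₂⟩
  exacts [h₂ (hsame.1 h₁), h₂ (hsame.2 h₁)]

-- Hausdorff's independent family, on an index type of cardinality `#β` when `β` is infinite.
def indepSet (A : Set β) : Set (Finset β × Finset (Finset β)) :=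
  open Classical in {p | p.1.filter (· ∈ A) ∈ p.2}

lemma exists_forall_mem_indepSet_iff (s : Finset (Set β)) (𝔖 : Set (Set β)) :
    ∃ p, ∀ A ∈ s, p ∈ indepSet A ↔ A ∈ 𝔖 := by
  classical
  obtain ⟨F, hF⟩ := s.exists_injOn_filter_mem
  refine ⟨(F, (s.filter (· ∈ 𝔖)).image fun A => F.filter (· ∈ A)), fun A hA => ?_⟩
  change _ ∈ Finset.image _ _ ↔ _
  simp only [Finset.mem_image, Finset.mem_filter]
  constructor
  · rintro ⟨B, ⟨hB, hB𝔖⟩, hBA⟩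
    rwa [← hF hB hA hBA]
  · exact fun hA𝔖 => ⟨A, ⟨hA, hA𝔖⟩, rfl⟩

lemma exists_independent_family [Infinite β] :
    ∃ E : Set β → Set β, ∀ (s : Finset (Set β)) (𝔖 : Set (Set β)),
      ∃ b, ∀ A ∈ s, b ∈ E A ↔ A ∈ 𝔖 := by
  have hcard : #(Finset β × Finset (Finset β)) = #β := by
    simp only [mk_prod, lift_id, mk_finset_of_infinite]
    exact mul_eq_self (infinite_iff.1 inferInstance)
  obtain ⟨e⟩ := Cardinal.eq.1 hcard
  refine ⟨fun A => e.symm ⁻¹' indepSet A, fun s 𝔖 => ?_⟩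
  obtain ⟨p, hp⟩ := exists_forall_mem_indepSet_iff s 𝔖
  exact ⟨e p, by simpa using hp⟩

theorem two_power_two_power_le_mk_ultrafilter [Infinite β] :
    (2 : Cardinal) ^ (2 : Cardinal) ^ #β ≤ #(Ultrafilter β) := by
  obtain ⟨E, hE⟩ := exists_independent_family (β := β)
  rw [← mk_set, ← mk_set]
  refine mk_le_of_surjective (f := fun 𝒰 : Ultrafilter β => {A | E A ∈ 𝒰}) fun 𝔖 => ?_
  classical
  let g : Set β → Set β := fun A => if A ∈ 𝔖 then E A else (E A)ᶜ
  have hfip : ∀ T : Finset (Set β), ↑T ⊆ Set.range g → (⋂₀ (T : Set (Set β))).Nonempty := by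
    intro T hT
    obtain ⟨s, -, rfl⟩ := Finset.subset_set_image_iff.1 (Set.image_univ ▸ hT)
    obtain ⟨b, hb⟩ := hE s 𝔖
    refine ⟨b, ?_⟩
    simp only [Finset.coe_image, Set.sInter_image, Set.mem_iInter]
    intro A hA
    by_cases hA𝔖 : A ∈ 𝔖 <;> simp [g, hA𝔖, hb A hA]
  obtain ⟨𝒰, h𝒰⟩ := Ultrafilter.exists_ultrafilter_of_finite_inter_nonempty _ hfip
  refine ⟨𝒰, Set.ext fun A => ?_⟩
  have hgA : g A ∈ 𝒰 := h𝒰 ⟨A, rfl⟩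
  by_cases hA𝔖 : A ∈ 𝔖
  · simpa [g, hA𝔖] using hgA
  · simpa [g, hA𝔖, Ultrafilter.compl_mem_iff_notMem] using hgA

end Pospisil

lemma Ultrafilter.exists_le_not_le_of_coe_ne {α : Type*} {f : Filter α} [f.NeBot]
    {𝒰 : Ultrafilter α} (h : (𝒰 : Filter α) ≠ f) :
    ∃ 𝒱 : Ultrafilter α, ↑𝒱 ≤ f ∧ ¬ (𝒰 : Filter α) ≤ 𝒱 := by
  by_contra! h𝒰
  refine h (le_antisymm ((h𝒰 _ (Ultrafilter.of_le f)).trans (Ultrafilter.of_le f)) ?_)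
  exact le_iff_ultrafilter.2 fun 𝒱 h𝒱 => by rw [Ultrafilter.eq_of_le (h𝒰 𝒱 h𝒱)]

instance {α : Type*} (𝒰 : Ultrafilter α) : Nonempty {A : Set α // A ∉ 𝒰} :=
  ⟨⟨∅, 𝒰.empty_notMem⟩⟩

instance {α : Type*} (𝒰 : Ultrafilter α) : IsDirected {A : Set α // A ∉ 𝒰} (· ≤ ·) :=
  ⟨fun A B => ⟨⟨A.1 ∪ B.1, by rw [Ultrafilter.union_mem_iff]; exact not_or.2 ⟨A.2, B.2⟩⟩,
    Set.subset_union_left, Set.subset_union_right⟩⟩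

section NotNhdsInfPrincipal

variable {α : Type*} [TopologicalSpace α] {𝒰 : Ultrafilter α}

lemma exists_ultrafilter_forall_coe_ne_nhds_inf_principal [Infinite α] :
    ∃ 𝒰 : Ultrafilter α, ∀ y S, (𝒰 : Filter α) ≠ 𝓝 y ⊓ 𝓟 S := by
  by_contra! h
  choose y S hyS using h
  have hle : #(Ultrafilter α) ≤ #(α × Set α) := by
    refine mk_le_of_injective (f := fun 𝒰 => (y 𝒰, S 𝒰)) fun 𝒰 𝒰' he => ?_
    simp only [Prod.mk.injEq] at he
    exact Ultrafilter.coe_injective (by rw [hyS 𝒰, hyS 𝒰', he.1, he.2])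
  have hα : ℵ₀ ≤ (2 : Cardinal) ^ #α := (infinite_iff.1 inferInstance).trans (cantor _).le
  have hprod : #(α × Set α) = 2 ^ #α := by
    rw [mk_prod, lift_id, lift_id, mk_set]
    exact Cardinal.mul_eq_right hα (cantor _).le (mk_ne_zero α)
  exact (hle.trans_eq hprod).not_gt ((cantor _).trans_le two_power_two_power_le_mk_ultrafilter)

lemma singleton_notMem_of_forall_coe_ne (h𝒰 : ∀ y S, (𝒰 : Filter α) ≠ 𝓝 y ⊓ 𝓟 S) (y : α) :
    {y} ∉ 𝒰 := by
  intro hy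
  refine h𝒰 y {y} ?_
  rw [principal_singleton, inf_eq_right.2 (pure_le_nhds y)]
  exact 𝒰.neBot.eq_pure_iff.2 hy

lemma isOpen_of_forall_isOpen_preimage_val (h𝒰 : ∀ y S, (𝒰 : Filter α) ≠ 𝓝 y ⊓ 𝓟 S) {V : Set α}
    (hV : ∀ A ∉ 𝒰, IsOpen ((↑) ⁻¹' V : Set A)) : IsOpen V := by
  refine isOpen_iff_mem_nhds.2 fun y hy => ?_
  by_contra hVy
  have : (𝓝 y ⊓ 𝓟 Vᶜ).NeBot := ⟨by rwa [Ne, inf_principal_eq_bot, compl_compl]⟩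
  obtain ⟨𝒱, h𝒱, h𝒰𝒱⟩ := Ultrafilter.exists_le_not_le_of_coe_ne (h𝒰 y Vᶜ)
  obtain ⟨B, hB𝒱, hB𝒰⟩ := Filter.not_le.1 h𝒰𝒱
  have hA : insert y B ∉ 𝒰 := by
    rw [Set.insert_eq, Ultrafilter.union_mem_iff, not_or]
    exact ⟨singleton_notMem_of_forall_coe_ne h𝒰 y, hB𝒰⟩
  obtain ⟨U, hU, hUV⟩ := IsInducing.subtypeVal.isOpen_iff.1 (hV _ hA)
  have hyU : y ∈ U := by
    simpa [hy] using congrArg ((⟨y, Set.mem_insert y B⟩ : (insert y B : Set α)) ∈ ·) hUV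
  -- a point of `B ⊆ insert y B` near `y` and outside `V` breaks `U ∩ insert y B = V ∩ insert y B`
  obtain ⟨b, ⟨hbU, hbB⟩, hbV⟩ := (𝒱 : Filter α).nonempty_of_mem
    (inter_mem (inter_mem (h𝒱.trans inf_le_left (hU.mem_nhds hyU)) hB𝒱)
      (h𝒱.trans inf_le_right (mem_principal_self _)))
  exact hbV (by
    simpa [hbU] using congrArg ((⟨b, Set.mem_insert_of_mem y hbB⟩ : (insert y B : Set α)) ∈ ·) hUV)

end NotNhdsInfPrincipal

abbrev Top₀ : Type (u + 1) := ObjectProperty.FullSubcategory fun Y : TopCat.{u} => T0Space Y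

namespace Top₀

instance (X : Top₀.{u}) : T0Space X.obj := X.property

def ofHom {X Y : Top₀.{u}} (f : C(X.obj, Y.obj)) : X ⟶ Y := ObjectProperty.homMk (TopCat.ofHom f)

def sierpinski : Top₀.{u} := ⟨TopCat.of (ULift.{u} Prop), inferInstance⟩

section Colimit

variable {J : Type*} [Category J] {F : J ⥤ Top₀.{u}} {c : Cocone F}

lemma exists_isOpen_preimage_ι_app (hc : IsColimit c) (V : ∀ j, Set (F.obj j).obj)
    (hV : ∀ j, IsOpen (V j)) (hcompat : ∀ ⦃j l⦄ (f : j ⟶ l), (F.map f).hom ⁻¹' V l = V j) :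
    ∃ W : Set c.pt.obj, IsOpen W ∧ ∀ j, (c.ι.app j).hom ⁻¹' W = V j := by
  let s : Cocone F :=
    { pt := sierpinski
      ι :=
        { app j := ofHom ⟨fun z => ULift.up (z ∈ V j),
            continuous_uliftUp.comp (continuous_Prop.2 (hV j))⟩
          naturality j l f := by
            ext z
            exact congrArg ULift.up (propext (Set.ext_iff.1 (hcompat f) z)) } }
  refine ⟨{w | ((hc.desc s).hom w).down},
    continuous_Prop.1 (continuous_uliftDown.comp (hc.desc s).hom.hom.continuous), fun j => ?_⟩
  ext z
  exact iff_of_eq (congrArg (fun φ => (φ.hom z).down) (hc.fac s j))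

lemma exists_ι_app_eq (hc : IsColimit c) (x : c.pt.obj) : ∃ j y, (c.ι.app j).hom y = x := by
  let W : Set c.pt.obj := ⋃ j, Set.range (c.ι.app j).hom
  let s : Cocone F :=
    { pt := ⟨TopCat.of W, inferInstance⟩
      ι :=
        { app j := ofHom ⟨fun y => ⟨(c.ι.app j).hom y, Set.mem_iUnion_of_mem j ⟨y, rfl⟩⟩,
            (c.ι.app j).hom.hom.continuous.subtype_mk _⟩
          naturality j l f := by
            ext y
            exact Subtype.ext (congrArg (fun φ => φ.hom y) (c.w f)) } }
  have hsection : hc.desc s ≫ ofHom ⟨Subtype.val, continuous_subtype_val⟩ = 𝟙 c.pt :=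
    hc.hom_ext fun j => by rw [← Category.assoc, hc.fac s j]; rfl
  have hx : ((hc.desc s).hom x).1 = x := congrArg (fun φ => φ.hom x) hsection
  obtain ⟨j, y, hy⟩ := Set.mem_iUnion.1 (hx ▸ ((hc.desc s).hom x).2)
  exact ⟨j, y, hy⟩

end Colimit

section Directed

variable {I : Type*} [Preorder I] {G : I ⥤ TopCat.{u}}
  (hG : ∀ ⦃i j : I⦄ (f : i ⟶ j), IsInducing (G.map f))
include hG

lemma preimage_map_largestOpenPreimageSubset_map {i k m : I} (hik : i ≤ k) (hkm : k ≤ m)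
    (U : Set (G.obj i)) :
    G.map (homOfLE hkm) ⁻¹' largestOpenPreimageSubset (G.map (homOfLE (hik.trans hkm))) U =
      largestOpenPreimageSubset (G.map (homOfLE hik)) U := by
  have hcomp : ⇑(G.map (homOfLE (hik.trans hkm))) =
      G.map (homOfLE hkm) ∘ G.map (homOfLE hik) := by
    rw [← TopCat.coe_comp, ← G.map_comp]; rfl
  rw [hcomp]
  exact (hG _).preimage_largestOpenPreimageSubset_comp _ U

variable [IsDirected I (· ≤ ·)]

variable (G) in
omit hG in
def extendOpen {i : I} (U : Set (G.obj i)) (j : I) : Set (G.obj j) :=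
  G.map (homOfLE (exists_ge_ge i j).choose_spec.2) ⁻¹'
    largestOpenPreimageSubset (G.map (homOfLE (exists_ge_ge i j).choose_spec.1)) U

omit hG in
lemma isOpen_extendOpen {i : I} (U : Set (G.obj i)) (j : I) : IsOpen (extendOpen G U j) :=
  isOpen_largestOpenPreimageSubset.preimage (G.map _).hom.continuous

lemma extendOpen_eq {i j k : I} (U : Set (G.obj i)) (hik : i ≤ k) (hjk : j ≤ k) :
    extendOpen G U j =
      G.map (homOfLE hjk) ⁻¹' largestOpenPreimageSubset (G.map (homOfLE hik)) U := by
  have hpush : ∀ {k m : I} (hik : i ≤ k) (hjk : j ≤ k) (hkm : k ≤ m),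
      G.map (homOfLE hjk) ⁻¹' largestOpenPreimageSubset (G.map (homOfLE hik)) U =
        G.map (homOfLE (hjk.trans hkm)) ⁻¹'
          largestOpenPreimageSubset (G.map (homOfLE (hik.trans hkm))) U := by
    intro k m hik hjk hkm
    rw [← preimage_map_largestOpenPreimageSubset_map hG hik hkm, ← Set.preimage_comp,
      ← TopCat.coe_comp, ← G.map_comp]
    rfl
  obtain ⟨hik₀, hjk₀⟩ := (exists_ge_ge i j).choose_spec
  obtain ⟨m, hk₀m, hkm⟩ := exists_ge_ge (exists_ge_ge i j).choose k
  rw [extendOpen, hpush hik₀ hjk₀ hk₀m, hpush hik hjk hkm]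

lemma extendOpen_self {i : I} {U : Set (G.obj i)} (hU : IsOpen U) : extendOpen G U i = U := by
  rw [extendOpen_eq hG U le_rfl le_rfl]
  exact (hG _).preimage_largestOpenPreimageSubset hU

lemma preimage_map_extendOpen {i j l : I} (U : Set (G.obj i)) (f : j ⟶ l) :
    G.map f ⁻¹' extendOpen G U l = extendOpen G U j := by
  obtain ⟨k, hik, hlk⟩ := exists_ge_ge i l
  rw [extendOpen_eq hG U hik hlk, extendOpen_eq hG U hik (f.le.trans hlk), ← Set.preimage_comp,
    ← TopCat.coe_comp, ← G.map_comp]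
  rfl

end Directed

lemma isEmbedding_ι_app {I : Type*} [Preorder I] [IsDirected I (· ≤ ·)] {F : I ⥤ Top₀.{u}}
    (hF : ∀ ⦃i j : I⦄ (f : i ⟶ j), IsInducing (F.map f).hom) {c : Cocone F} (hc : IsColimit c)
    (i : I) : IsEmbedding (c.ι.app i).hom := by
  refine IsInducing.isEmbedding ((isInducing_iff _).2
    (le_antisymm (c.ι.app i).hom.hom.continuous.le_induced fun U hU => ?_))
  let G := F ⋙ ObjectProperty.ι _
  obtain ⟨W, hW, hWU⟩ := exists_isOpen_preimage_ι_app hc (extendOpen G U)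
    (isOpen_extendOpen (G := G) U) fun _ _ f => preimage_map_extendOpen (G := G) hF U f
  exact isOpen_induced_iff.2 ⟨W, hW, (hWU i).trans (extendOpen_self (G := G) hF hU)⟩

lemma exists_lift_of_finite {I : Type*} [Preorder I] [Nonempty I] [IsDirected I (· ≤ ·)]
    {F : I ⥤ Top₀.{u}} {c : Cocone F} (hc : IsColimit c) {X : Type*} [Finite X]
    (φ : X → c.pt.obj) : ∃ (M : I) (ψ : X → (F.obj M).obj), (c.ι.app M).hom ∘ ψ = φ := by
  choose j y hy using fun x => exists_ι_app_eq hc (φ x)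
  obtain ⟨M, hM⟩ := Finite.exists_le j
  refine ⟨M, fun x => (F.map (homOfLE (hM x))).hom (y x), funext fun x => ?_⟩
  rw [← hy x]
  exact congrArg (fun f => f.hom (y x)) (c.w (homOfLE (hM x)))

theorem finGenWrtEmbeddingsIn_of_finite (X : Top₀.{u}) [Finite X.obj] :
    TopCat.FinGenWrtEmbeddingsIn _ X := by
  intro I _ _ _ F hF c hc f
  have hemb := isEmbedding_ι_app (fun _ _ g => (hF g).isInducing) hc
  refine ⟨?_, fun i g g' hg hg' => ⟨i, le_rfl, ?_⟩⟩
  · obtain ⟨M, ψ, hψ⟩ := exists_lift_of_finite hc f.hom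
    have hψc : Continuous ψ := (hemb M).isInducing.continuous_iff.2 (hψ ▸ f.hom.hom.continuous)
    exact ⟨M, ofHom ⟨ψ, hψc⟩, by ext x; exact congrFun hψ x⟩
  · have hgg' : g = g' := by
      ext x
      exact (hemb i).injective (congrArg (fun φ => φ.hom x) (hg.trans hg'.symm))
    rw [hgg']

section SubspaceDiagram

variable (X : Top₀.{u}) (𝒰 : Ultrafilter X.obj)

def subspaceDiagram : {A : Set X.obj // A ∉ 𝒰} ⥤ Top₀.{u} where
  obj A := ⟨TopCat.of A.1, inferInstance⟩
  map f := ofHom ⟨Set.inclusion f.le, continuous_inclusion f.le⟩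

def subspaceCocone : Cocone (subspaceDiagram X 𝒰) where
  pt := X
  ι := { app _ := ofHom ⟨Subtype.val, continuous_subtype_val⟩ }

variable {X 𝒰}

lemma cocone_ι_app_singleton (s : Cocone (subspaceDiagram X 𝒰))
    {A : {A : Set X.obj // A ∉ 𝒰}} {x : X.obj} (hx : x ∈ A.1) (hx' : {x} ∉ 𝒰) :
    (s.ι.app ⟨{x}, hx'⟩).hom ⟨x, rfl⟩ = (s.ι.app A).hom ⟨x, hx⟩ :=
  (congrArg (fun f => f.hom (⟨x, rfl⟩ : ({x} : Set X.obj)))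
    (s.w (homOfLE (show (⟨{x}, hx'⟩ : {A : Set X.obj // A ∉ 𝒰}) ≤ A from
      Set.singleton_subset_iff.2 hx)))).symm

def subspaceCoconeIsColimit (h𝒰 : ∀ y S, (𝒰 : Filter X.obj) ≠ 𝓝 y ⊓ 𝓟 S) :
    IsColimit (subspaceCocone X 𝒰) := by
  have hsing := singleton_notMem_of_forall_coe_ne h𝒰
  refine
    { desc s := ofHom ⟨fun x => (s.ι.app ⟨{x}, hsing x⟩).hom ⟨x, rfl⟩,
        continuous_def.2 fun O hO => ?_⟩
      fac s A := ?_
      uniq s m hm := ?_ }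
  · refine isOpen_of_forall_isOpen_preimage_val h𝒰 fun A hA => ?_
    have hO' : IsOpen ((s.ι.app ⟨A, hA⟩).hom ⁻¹' O : Set A) :=
      hO.preimage (s.ι.app ⟨A, hA⟩).hom.hom.continuous
    convert hO' using 1
    ext ⟨x, hx⟩
    exact iff_of_eq (congrArg (· ∈ O) (cocone_ι_app_singleton s (A := ⟨A, hA⟩) hx _))
  · ext ⟨x, hx⟩
    exact cocone_ι_app_singleton s hx _
  · ext x
    exact congrArg (fun f => f.hom (⟨x, rfl⟩ : ({x} : Set X.obj))) (hm ⟨{x}, hsing x⟩)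

theorem not_finGenWrtEmbeddingsIn_of_infinite (X : Top₀.{u}) [Infinite X.obj] :
    ¬ TopCat.FinGenWrtEmbeddingsIn _ X := by
  obtain ⟨𝒰, h𝒰⟩ := exists_ultrafilter_forall_coe_ne_nhds_inf_principal (α := X.obj)
  intro hX
  obtain ⟨⟨A, g, hg⟩, -⟩ := hX _ (subspaceDiagram X 𝒰) (fun f => IsEmbedding.inclusion f.le) _
    (subspaceCoconeIsColimit h𝒰) (𝟙 X)
  refine A.2 (mem_of_superset univ_mem fun x _ => ?_)
  have hx : (g.hom x).1 = x := congrArg (fun φ => φ.hom x) hg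
  exact hx ▸ (g.hom x).2

end SubspaceDiagram

end Top₀

/-- In the category `Top₀` of T₀-spaces, a space is finitely generated
with respect to embeddings if and only if its underlying set is finite. -/
theorem T0_finGenWrtEmbeddings_iff_finite
    (X : ObjectProperty.FullSubcategory (fun Y : TopCat.{u} => T0Space Y)) :
    TopCat.FinGenWrtEmbeddingsIn _ X ↔ Finite X.obj := by
  refine ⟨fun hX => ?_, fun _ => Top₀.finGenWrtEmbeddingsIn_of_finite X⟩
  exact not_infinite_iff_finite.1 fun _ => Top₀.not_finGenWrtEmbeddingsIn_of_infinite X hX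
end

section
/- Every infinite T₀ topological space X contains either a strictly increasing sequence U₀ ⊊ U₁ ⊊ U₂ ⊊ … of open subsets of X, or a strictly increasing sequence F₀ ⊊ F₁ ⊊ F₂ ⊊ … of closed subsets of X. -/
/-!
Pick an injective sequence in `X`. By Ramsey's theorem for pairs it has a subsequence that is
either a specialization chain `x₀ ⤳ x₁ ⤳ ⋯` or has no `xᵢ ⤳ xⱼ` with `i < j`. In the first case
the closures of the points strictly decrease (strictly, by T₀), so their complements form an
increasing chain of open sets. In the second case `xₙ` lies outside the closure of `{xᵢ | i < n}`,
so these closures form an increasing chain of closed sets.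
-/

open Function Set

section

variable {X : Type*} [TopologicalSpace X]

theorem strictMono_compl_closure_singleton [T0Space X] {x : ℕ → X} (hx : Injective x)
    (hspec : ∀ n, x n ⤳ x (n + 1)) : StrictMono fun n ↦ (closure {x n})ᶜ := by
  refine (compl_strictAnti (Set X)).comp <| strictAnti_nat_of_succ_lt fun n ↦ ?_
  refine (hspec n).closure_subset.ssubset_of_ne fun heq ↦ ?_
  have : x n = x (n + 1) := (inseparable_iff_closure_eq.mpr heq.symm).eq
  exact n.succ_ne_self (hx this).symm

theorem strictMono_closure_iUnion_lt {x : ℕ → X} (hx : ∀ i j, i < j → ¬x i ⤳ x j) :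
    StrictMono fun n ↦ ⋃ i < n, closure {x i} := by
  refine strictMono_nat_of_lt_succ fun n ↦ ssubset_iff_subset_ne.mpr ⟨?_, fun heq ↦ ?_⟩
  · exact biUnion_mono (fun i (hi : i < n) ↦ hi.trans n.lt_succ_self) fun _ _ ↦ le_rfl
  · have hn : x n ∈ ⋃ i < n + 1, closure {x i} := mem_biUnion n.lt_succ_self (subset_closure rfl)
    obtain ⟨i, hi, hxi⟩ := mem_iUnion₂.mp (heq ▸ hn)
    exact hx i n hi (specializes_iff_mem_closure.mpr hxi)

end

/-- Every infinite T₀ topological space contains either a strictly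
increasing sequence of open subsets or a strictly increasing sequence of closed subsets. -/
theorem infinite_T0_strict_chain (X : Type*) [TopologicalSpace X] [T0Space X] [Infinite X] :
    (∃ U : ℕ → Set X, (∀ n, IsOpen (U n)) ∧ StrictMono U) ∨
    (∃ F : ℕ → Set X, (∀ n, IsClosed (F n)) ∧ StrictMono F) := by
  let f := Infinite.natEmbedding X
  obtain ⟨g, hchain | hbad⟩ := exists_increasing_or_nonincreasing_subseq' (· ⤳ ·) f
  · exact .inl ⟨_, fun _ ↦ isClosed_closure.isOpen_compl,
      strictMono_compl_closure_singleton (f.injective.comp g.injective) hchain⟩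
  · exact .inr ⟨_, fun n ↦ (finite_lt_nat n).isClosed_biUnion fun _ _ ↦ isClosed_closure,
      strictMono_closure_iUnion_lt hbad⟩
end

section
/- The empty space is the only finitely generated object of the category Top₀ of T₀-spaces: every T₀-space X that is finitely generated in Top₀ is empty. -/
open CategoryTheory CategoryTheory.Limits

universe u

/-!
On the set `{left, right} ∪ ℕ` let `τₙ` be the topology whose open sets `U` satisfy: if `U`
meets `{left, right}` then it contains a tail of the sequence, and if it contains one of the
first `n` terms of the sequence then it contains both `left` and `right`. Each `τₙ` is T₀ and
the `τₙ` decrease, so the identity maps form a chain of injections in Top₀. A set open in every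
`τₙ` that contains `left` contains some term `j` of the sequence, hence (by `τ_{j+1}`) also
`right`; so every cocone identifies `left` and `right`. For a point of `X`, the constant maps
`X → τ₀` with values `left` and `right` therefore agree in the colimit (which exists: the
separation quotient makes Top₀ reflective in Top), yet no injective connecting map merges them.
-/

namespace TopCat

abbrev IsT0 : ObjectProperty TopCat.{u} := fun Y => T0Space Y

def separationQuotientHomEquiv (X : TopCat.{u}) (Y : IsT0.FullSubcategory) :
    ((⟨of (SeparationQuotient X), inferInstance⟩ : IsT0.FullSubcategory) ⟶ Y) ≃
      (X ⟶ IsT0.ι.obj Y) :=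
  haveI : T0Space (IsT0.ι.obj Y) := Y.property
  InducedCategory.homEquiv.trans
  { toFun f := ofHom (f.hom.comp ⟨SeparationQuotient.mk, SeparationQuotient.continuous_mk⟩)
    invFun g := ofHom ⟨SeparationQuotient.lift g fun _ _ h => (h.map g.hom.continuous).eq,
      SeparationQuotient.continuous_lift g.hom.continuous⟩
    left_inv f := by ext x; obtain ⟨x, rfl⟩ := SeparationQuotient.surjective_mk x; rfl
    right_inv g := rfl }

def t0Reflector : TopCat.{u} ⥤ IsT0.FullSubcategory :=
  Adjunction.leftAdjointOfEquiv separationQuotientHomEquiv (fun _ _ _ _ _ => rfl)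

instance : Reflective (IsT0.{u}.ι) where
  L := t0Reflector
  adj := Adjunction.adjunctionOfEquivLeft _ _

instance : HasColimitsOfSize.{u, u} IsT0.{u}.FullSubcategory :=
  hasColimits_of_reflective IsT0.ι

theorem FinGenIn.isEmpty_of_not_injective {P : TopCat.{u} → Prop}
    {X : ObjectProperty.FullSubcategory P} (hX : FinGenIn P X) {I : Type u} [PartialOrder I]
    [Nonempty I] [IsDirected I (· ≤ ·)] {F : I ⥤ ObjectProperty.FullSubcategory P}
    (hF : ∀ {i j : I} (f : i ⟶ j), Function.Injective ((ObjectProperty.ι P).map (F.map f)))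
    {c : Cocone F} (hc : IsColimit c) {i : I} (hi : ¬ Function.Injective (c.ι.app i).hom) :
    IsEmpty X.obj := by
  refine ⟨fun x => hi fun p q hpq => ?_⟩
  let const (r : (F.obj i).obj) : X ⟶ F.obj i :=
    ObjectProperty.homMk (ofHom (ContinuousMap.const _ r))
  have hconst : const q ≫ c.ι.app i = const p ≫ c.ι.app i := by
    ext; exact hpq.symm
  obtain ⟨j, _, hj⟩ := (hX I F hF c hc _).2 i (const p) (const q) rfl hconst
  exact hF _ congr(($hj).hom x)

end TopCat

namespace MergingChain

inductive Pt : Type u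
  | left
  | right
  | seq (j : ℕ)

open Pt

def IsOpenAt (n : ℕ) (U : Set Pt.{u}) : Prop :=
  (left ∈ U ∨ right ∈ U → ∀ᶠ j in Filter.atTop, seq j ∈ U) ∧
    ∀ j < n, seq j ∈ U → left ∈ U ∧ right ∈ U

theorem IsOpenAt.of_le {m n : ℕ} (hmn : m ≤ n) {U : Set Pt.{u}} (hU : IsOpenAt n U) :
    IsOpenAt m U :=
  ⟨hU.1, fun j hj => hU.2 j (hj.trans_le hmn)⟩

theorem left_mem_iff_right_mem {U : Set Pt.{u}} (hU : ∀ n, IsOpenAt n U) :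
    left ∈ U ↔ right ∈ U := by
  suffices h : left ∈ U ∨ right ∈ U → left ∈ U ∧ right ∈ U from
    ⟨fun hl => (h (.inl hl)).2, fun hr => (h (.inr hr)).1⟩
  intro h
  obtain ⟨j, hj⟩ := ((hU 0).1 h).exists
  exact (hU (j + 1)).2 j j.lt_succ_self hj

def tail (m : ℕ) : Set Pt.{u} := seq '' Set.Ici m

theorem isOpenAt_union_tail {n m : ℕ} (hnm : n ≤ m) {S : Set Pt.{u}}
    (hS : ∀ j < n, seq j ∈ S → left ∈ S ∧ right ∈ S) : IsOpenAt n (S ∪ tail m) := by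
  refine ⟨fun _ => Filter.eventually_atTop.2 ⟨m, fun k hk => .inr ⟨k, hk, rfl⟩⟩,
    fun j hj hjS => ?_⟩
  rcases hjS with hjS | ⟨k, hk, ⟨⟩⟩
  · exact (hS j hj hjS).imp .inl .inl
  · exact absurd (hnm.trans hk) hj.not_ge

def Stage (_n : ℕ) : Type u := Pt.{u}

instance (n : ℕ) : TopologicalSpace (Stage.{u} n) where
  IsOpen := IsOpenAt n
  isOpen_univ := ⟨fun _ => .of_forall fun _ => trivial, fun _ _ _ => ⟨trivial, trivial⟩⟩
  isOpen_inter U V hU hV := by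
    refine ⟨fun h => ?_, fun j hj hjUV => ?_⟩
    · exact (hU.1 (h.imp And.left And.left)).and (hV.1 (h.imp And.right And.right))
    · obtain ⟨hlU, hrU⟩ := hU.2 j hj hjUV.1
      obtain ⟨hlV, hrV⟩ := hV.2 j hj hjUV.2
      exact ⟨⟨hlU, hlV⟩, hrU, hrV⟩
  isOpen_sUnion S hS := by
    refine ⟨?_, ?_⟩
    · rintro (⟨U, hUS, hU⟩ | ⟨U, hUS, hU⟩)
      all_goals exact ((hS U hUS).1 (by tauto)).mono fun j hj => ⟨U, hUS, hj⟩
    · rintro j hj ⟨U, hUS, hjU⟩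
      exact ((hS U hUS).2 j hj hjU).imp (⟨U, hUS, ·⟩) (⟨U, hUS, ·⟩)

theorem eq_of_forall_isOpenAt_mem_iff {n : ℕ} {x y : Pt.{u}}
    (hxy : ∀ U, IsOpenAt n U → (x ∈ U ↔ y ∈ U)) : x = y := by
  have key {S : Set Pt} {m : ℕ} (hm : n ≤ m)
      (hS : ∀ j < n, seq j ∈ S → left ∈ S ∧ right ∈ S) : x ∈ S ∪ tail m ↔ y ∈ S ∪ tail m :=
    hxy _ (isOpenAt_union_tail hm hS)
  -- `S` contains one of the two points (and `left`, `right` if it is a term of the sequence),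
  -- and `m` is large enough that `tail m` misses the other point.
  rcases x with _ | _ | j <;> rcases y with _ | _ | k
  · rfl
  · simpa [tail] using key (S := {left}) le_rfl (by simp)
  · simpa [tail] using key (S := {left}) (le_max_left n (k + 1)) (by simp)
  · simpa [tail] using key (S := {right}) le_rfl (by simp)
  · rfl
  · simpa [tail] using key (S := {right}) (le_max_left n (k + 1)) (by simp)
  · simpa [tail] using (key (S := {left}) (le_max_left n (j + 1)) (by simp)).symm
  · simpa [tail] using (key (S := {right}) (le_max_left n (j + 1)) (by simp)).symm
  · simpa [tail, eq_comm] using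
      key (S := {left, right, seq j}) (le_max_left n (k + 1)) (by simp)

instance (n : ℕ) : T0Space (Stage.{u} n) :=
  (t0Space_iff_inseparable _).2 fun _ _ hxy =>
    eq_of_forall_isOpenAt_mem_iff (inseparable_iff_forall_isOpen.1 hxy)

def Stage.coarsen {m n : ℕ} (h : m ≤ n) : C(Stage.{u} m, Stage.{u} n) where
  toFun := id
  continuous_toFun := continuous_def.2 fun _ hU => hU.of_le h

def diagram : ULift.{u} ℕ ⥤ TopCat.IsT0.{u}.FullSubcategory where
  obj n := ⟨TopCat.of (Stage n.down), inferInstanceAs (T0Space (Stage n.down))⟩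
  map h := ObjectProperty.homMk (TopCat.ofHom (Stage.coarsen (ULift.down_le.2 (leOfHom h))))

theorem diagram_map_injective {i j : ULift.{u} ℕ} (f : i ⟶ j) :
    Function.Injective ((ObjectProperty.ι TopCat.IsT0).map (diagram.map f)) :=
  fun _ _ h => h

theorem cocone_ι_app_zero_left_eq_right (s : Cocone diagram.{u}) :
    (s.ι.app ⟨0⟩).hom left = (s.ι.app ⟨0⟩).hom right := by
  have : T0Space s.pt.obj := s.pt.property
  refine Inseparable.eq (X := s.pt.obj) (inseparable_iff_forall_isOpen.2 fun V hV => ?_)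
  have hU (n : ℕ) : IsOpenAt n ((s.ι.app ⟨0⟩).hom ⁻¹' V) := by
    rw [← s.w (homOfLE (ULift.down_le.1 n.zero_le))]
    exact (s.ι.app ⟨n⟩).hom.hom.continuous.isOpen_preimage V hV
  exact left_mem_iff_right_mem hU

end MergingChain

/-- The empty space is the only finitely generated object of the
category `Top₀` of T₀-spaces. -/
theorem T0_finGen_empty (X : ObjectProperty.FullSubcategory (fun Y : TopCat.{u} => T0Space Y))
    (hX : TopCat.FinGenIn _ X) : IsEmpty X.obj :=
  hX.isEmpty_of_not_injective MergingChain.diagram_map_injective (colimit.isColimit _)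
    (i := ⟨0⟩) fun h => nomatch h (MergingChain.cocone_ι_app_zero_left_eq_right _)
end

section
/- For every set-indexed family (X_i)_{i∈I} of topological spaces there exist a topological space Y and a subset V ⊆ Y such that V is not open in Y, yet for every i ∈ I and every continuous map f : X_i → Y the preimage f⁻¹(V) is open in X_i; moreover Y can be chosen to be a regular T₁-space. Consequently, none of the categories Top, Top₀, Top₁, Haus has a small strong generator (no small set of objects forms a final sink onto every object). -/
/-!
Take a regular cardinal `c` exceeding the size of every space of the family, a set `Y` of size
`c` and a point `a ∈ Y`, and topologise `Y` so that all points other than `a` are isolated while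
the neighbourhoods of `a` are the sets containing `a` whose complement has size `< c`. This is a
regular T₁-space in which `{a}` is not open. A continuous map `f : X → Y` from a space with
`#X < c` cannot see this: `{a} ∪ (range f)ᶜ` is open and has the same preimage as `{a}`.
-/

open CategoryTheory

universe u

def IsFinalSinkGenerator (P : TopCat.{u} → Prop) {γ : Type u} (g : γ → TopCat.{u}) : Prop :=
  ∀ Y : TopCat.{u}, P Y →
    ∀ V : Set Y, (∀ (i : γ) (f : g i ⟶ Y), IsOpen (f ⁻¹' V)) → IsOpen V

open Set Filter Cardinal Topology

section NhdsAdjoint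

variable {α : Type*} {a : α} {l : Filter α}

theorem isOpen_nhdsAdjoint_of_notMem {s : Set α} (h : a ∉ s) : IsOpen[nhdsAdjoint a l] s :=
  fun ha ↦ absurd ha h

theorem isClosed_nhdsAdjoint_of_mem {s : Set α} (h : a ∈ s) : IsClosed[nhdsAdjoint a l] s :=
  @IsClosed.mk α (nhdsAdjoint a l) s (isOpen_nhdsAdjoint_of_notMem fun h' ↦ h' h)

theorem isOpen_singleton_nhdsAdjoint_self_iff : IsOpen[nhdsAdjoint a l] {a} ↔ {a} ∈ l :=
  ⟨fun h ↦ h rfl, fun h _ ↦ h⟩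

theorem isClosed_singleton_nhdsAdjoint (hl : ∀ b ≠ a, {b}ᶜ ∈ l) (b : α) :
    IsClosed[nhdsAdjoint a l] {b} := by
  by_cases hb : b = a
  · exact isClosed_nhdsAdjoint_of_mem hb.symm
  · exact @IsClosed.mk α (nhdsAdjoint a l) _ fun _ ↦ hl b hb

theorem t1Space_nhdsAdjoint (hl : ∀ b ≠ a, {b}ᶜ ∈ l) : @T1Space α (nhdsAdjoint a l) :=
  @T1Space.mk α (nhdsAdjoint a l) (isClosed_singleton_nhdsAdjoint hl)

/-- At `a` every open neighbourhood is also closed, and every other point is clopen. -/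
theorem regularSpace_nhdsAdjoint (hl : ∀ b ≠ a, {b}ᶜ ∈ l) :
    @RegularSpace α (nhdsAdjoint a l) := by
  let _ := nhdsAdjoint a l
  refine .of_exists_mem_nhds_isClosed_subset fun x s hs ↦ ?_
  by_cases hx : x = a
  · subst hx
    obtain ⟨U, hUs, hU, hxU⟩ := mem_nhds_iff.mp hs
    exact ⟨U, hU.mem_nhds hxU, isClosed_nhdsAdjoint_of_mem hxU, hUs⟩
  · exact ⟨{x}, (isOpen_singleton_nhdsAdjoint l hx).mem_nhds rfl,
      isClosed_singleton_nhdsAdjoint hl x, singleton_subset_iff.mpr (mem_of_mem_nhds hs)⟩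

theorem isOpen_preimage_nhdsAdjoint {X : Type*} [TopologicalSpace X] {f : X → α}
    (hf : Continuous[_, nhdsAdjoint a l] f) (hrange : (range f)ᶜ ∈ l) (s : Set α) :
    IsOpen (f ⁻¹' s) := by
  let _ := nhdsAdjoint a l
  by_cases ha : a ∈ s
  · have hopen : IsOpen (s ∪ (range f)ᶜ) := fun _ ↦ mem_of_superset hrange subset_union_right
    simpa only [preimage_union, preimage_compl, preimage_range, compl_univ, union_empty]
      using hopen.preimage hf
  · exact (isOpen_nhdsAdjoint_of_notMem ha).preimage hf

end NhdsAdjoint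

theorem singleton_notMem_cocardinal {α : Type u} {c : Cardinal.{u}} (hc : c.IsRegular)
    (hα : c ≤ #α) (a : α) : {a} ∉ cocardinal α hc := by
  have : Infinite α := infinite_iff.mpr (hc.aleph0_le.trans hα)
  have hsmall : #({a} : Set α) < #α := by
    rw [mk_singleton]
    exact one_lt_aleph0.trans_le (aleph0_le_mk α)
  rw [mem_cocardinal, mk_compl_of_infinite _ hsmall]
  exact not_lt.mpr hα

theorem TopCat.exists_not_isOpen_isOpen_preimage_of_mk_le (κ : Cardinal.{u}) :
    ∃ (Y : TopCat.{u}) (V : Set Y), ¬ IsOpen V ∧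
      (∀ (X : TopCat.{u}) (f : X ⟶ Y), #X ≤ κ → IsOpen (f ⁻¹' V)) ∧
      RegularSpace Y ∧ T1Space Y := by
  set c := Order.succ (max κ ℵ₀)
  have hc : c.IsRegular := isRegular_succ (le_max_right _ _)
  obtain ⟨a⟩ : Nonempty c.out := mk_ne_zero_iff.mp (by rw [mk_out]; exact hc.pos.ne')
  let _ : TopologicalSpace c.out := nhdsAdjoint a (cocardinal c.out hc)
  have hl : ∀ b ≠ a, {b}ᶜ ∈ cocardinal c.out hc :=
    fun b _ ↦ (finite_singleton b).compl_mem_cocardinal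
  refine ⟨TopCat.of c.out, {a}, ?_, fun X f hX ↦ ?_, regularSpace_nhdsAdjoint hl,
    t1Space_nhdsAdjoint hl⟩
  · rw [isOpen_singleton_nhdsAdjoint_self_iff]
    exact singleton_notMem_cocardinal hc (mk_out c).ge a
  · refine isOpen_preimage_nhdsAdjoint f.hom.continuous (compl_mem_cocardinal_of_card_lt ?_) _
    calc #(range f) ≤ #X := mk_range_le
      _ ≤ max κ ℵ₀ := hX.trans (le_max_left _ _)
      _ < c := Order.lt_succ_of_not_isMax (not_isMax _)

theorem TopCat.exists_not_isOpen_forall_isOpen_preimage {I : Type u} (X : I → TopCat.{u}) :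
    ∃ (Y : TopCat.{u}) (V : Set Y), ¬ IsOpen V ∧
      (∀ (i : I) (f : X i ⟶ Y), IsOpen (f ⁻¹' V)) ∧ RegularSpace Y ∧ T1Space Y := by
  obtain ⟨Y, V, hV, hpre, hY⟩ := exists_not_isOpen_isOpen_preimage_of_mk_le #(Σ i, X i)
  exact ⟨Y, V, hV, fun i f ↦ hpre _ f (by
    simpa only [mk_sigma] using le_sum (fun i ↦ #(X i)) i), hY⟩

theorem not_isFinalSinkGenerator {P : TopCat.{u} → Prop}
    (hP : ∀ Y : TopCat.{u}, RegularSpace Y → T1Space Y → P Y) {γ : Type u}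
    (g : γ → TopCat.{u}) : ¬ IsFinalSinkGenerator P g := fun hg ↦ by
  obtain ⟨Y, V, hV, hpre, hreg, hT1⟩ := TopCat.exists_not_isOpen_forall_isOpen_preimage g
  exact hV (hg Y (hP Y hreg hT1) V hpre)

/-- For every set-indexed family of topological spaces there exist a
regular T₁-space `Y` and a non-open subset `V ⊆ Y` such that the preimage of `V` under
every continuous map from a member of the family to `Y` is open. Consequently, none of the
categories `Top`, `Top₀`, `Top₁`, `Haus` has a small strong generator: no set-indexed
family of objects of the category forms a final sink onto every object of the category. -/
theorem no_strong_generator_for_Top_T0_T1_Haus :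
    (∀ (I : Type u) (X : I → TopCat.{u}),
      ∃ (Y : TopCat.{u}) (V : Set Y),
        ¬ IsOpen V ∧
        (∀ (i : I) (f : X i ⟶ Y), IsOpen (f ⁻¹' V)) ∧
        RegularSpace Y ∧ T1Space Y) ∧
    (∀ (γ : Type u) (g : γ → TopCat.{u}),
      ¬ IsFinalSinkGenerator (fun _ => True) g) ∧
    (∀ (γ : Type u) (g : γ → TopCat.{u}), (∀ i, T0Space (g i)) →
      ¬ IsFinalSinkGenerator (fun Y => T0Space Y) g) ∧
    (∀ (γ : Type u) (g : γ → TopCat.{u}), (∀ i, T1Space (g i)) →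
      ¬ IsFinalSinkGenerator (fun Y => T1Space Y) g) ∧
    (∀ (γ : Type u) (g : γ → TopCat.{u}), (∀ i, T2Space (g i)) →
      ¬ IsFinalSinkGenerator (fun Y => T2Space Y) g) :=
  ⟨fun _ ↦ TopCat.exists_not_isOpen_forall_isOpen_preimage,
    fun _ ↦ not_isFinalSinkGenerator fun _ _ _ ↦ trivial,
    fun _ g _ ↦ not_isFinalSinkGenerator (fun _ _ _ ↦ by infer_instance) g,
    fun _ g _ ↦ not_isFinalSinkGenerator (fun _ _ _ ↦ by infer_instance) g,
    fun _ g _ ↦ not_isFinalSinkGenerator (fun _ _ _ ↦ by infer_instance) g⟩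
end
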